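/- arXiv:2407.18186 — 3 statements merged into one kernel-verified Lean document; each statement's English description precedes it below -/
import Mathlib

section
/- For every integer m ≥ 0 and every natural number n, u(m,n) equals the number of partitions λ of n satisfying all of: (1) rank(λ) ≤ −m−1 if m ≥ 1, and rank(λ) ≤ 0 if m = 0; (2) m−1 belongs to the rank-set of λ; (3) if m ≥ 2, then λ_1 > λ_2 > ⋯ > λ_m. -/
open Nat Finset

namespace StrUni

/-- `u m n`: the number of strongly unimodal sequences of weight `n` and rank `m`.
A strongly unimodal sequence is a finite list of positive integers which strictly
increases up to a peak (at 0-based index `k`) and strictly decreases afterwards;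
its rank is `ℓ - 2(k+1) + 1` where the peak is the `(k+1)`-st entry. -/
noncomputable def u (m : ℤ) (n : ℕ) : ℕ :=
  Nat.card {l : List ℕ //
    l.sum = n ∧ (∀ x ∈ l, 0 < x) ∧
    ∃ k : ℕ, k < l.length ∧
      (∀ i : ℕ, i + 1 ≤ k → l.getD i 0 < l.getD (i + 1) 0) ∧
      (∀ i : ℕ, k ≤ i → i + 1 < l.length → l.getD (i + 1) 0 < l.getD i 0) ∧
      (l.length : ℤ) - 2 * ((k : ℤ) + 1) + 1 = m}

/-- A list `l` is a partition of `n`: weakly decreasing, positive parts, sum `n`. -/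
def IsPartition (l : List ℕ) (n : ℕ) : Prop :=
  l.Pairwise (· ≥ ·) ∧ (∀ x ∈ l, 0 < x) ∧ l.sum = n

/-- Dyson's rank of a partition (list form): largest part minus number of parts. -/
def rankL (l : List ℕ) : ℤ := (l.headD 0 : ℤ) - l.length

/-- `r` belongs to the rank-set `{j - λ_{j+1} : j = 0, 1, 2, ...}` of the partition `l`. -/
def InRankSet (l : List ℕ) (r : ℤ) : Prop := ∃ j : ℕ, (j : ℤ) - (l.getD j 0 : ℤ) = r

/-- Dyson's rank of a partition (multiset form). -/
def rank {n : ℕ} (p : n.Partition) : ℤ := (p.parts.sup : ℤ) - p.parts.card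

/-- The Andrews–Garvan crank of a partition. -/
def crank {n : ℕ} (p : n.Partition) : ℤ :=
  if p.parts.count 1 = 0 then (p.parts.sup : ℤ)
  else ((p.parts.filter (fun x => p.parts.count 1 < x)).card : ℤ) - p.parts.count 1

/-- `p n`: the number of partitions of `n`. -/
def partitionCount (n : ℕ) : ℕ := Fintype.card n.Partition

/-- `N m n`: the number of partitions of `n` with rank `m`. -/
def N (m : ℤ) (n : ℕ) : ℕ := (Finset.univ.filter (fun p : n.Partition => rank p = m)).card

/-- `M m n`: the number of partitions of `n` with crank `m`. -/
def M (m : ℤ) (n : ℕ) : ℕ := (Finset.univ.filter (fun p : n.Partition => crank p = m)).card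

/-- `ospt n = Σ_{λ⊢n, crank≥0} crank(λ) − Σ_{λ⊢n, rank≥0} rank(λ)`. -/
def ospt (n : ℕ) : ℤ :=
  (∑ p ∈ Finset.univ.filter (fun p : n.Partition => 0 ≤ crank p), crank p) -
  (∑ p ∈ Finset.univ.filter (fun p : n.Partition => 0 ≤ rank p), rank p)

/-- The conjugate of a partition given as a list. -/
def conjugate (l : List ℕ) : List ℕ :=
  (List.range (l.headD 0)).map (fun i => (l.filter (fun x => i < x)).length)

/-- The `m`-Durfee rectangle size `j` of a partition `l`: the largest `k ≥ 1` with
`λ_{k+m} ≥ k`, and `0` if there is no such `k`. -/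
def mDurfee (m : ℕ) (l : List ℕ) : ℕ :=
  Nat.findGreatest (fun k => k ≤ l.getD (k + m - 1) 0) l.length

/-- `α` in the `m`-Durfee rectangle symbol `(α, β)_{(m+j)×j}`:
the conjugate of `(λ_1 - j, ..., λ_{m+j} - j)`. -/
def mAlpha (m : ℕ) (l : List ℕ) : List ℕ :=
  conjugate ((l.take (m + mDurfee m l)).map (fun x => x - mDurfee m l))

/-- `β` in the `m`-Durfee rectangle symbol: the rows below the rectangle. -/
def mBeta (m : ℕ) (l : List ℕ) : List ℕ := l.drop (m + mDurfee m l)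

/-- The Durfee square side of a partition. -/
def durfee (l : List ℕ) : ℕ := mDurfee 0 l

/-- `γ` in the Durfee symbol `(γ, δ)_d`. -/
def dGamma (l : List ℕ) : List ℕ := mAlpha 0 l

/-- `δ` in the Durfee symbol `(γ, δ)_d`. -/
def dDelta (l : List ℕ) : List ℕ := mBeta 0 l

end StrUni

namespace StrUni


/-! ### getD helper lemmas -/

lemma getD_map_range (n i : ℕ) (f : ℕ → ℕ) :
    ((List.range n).map f).getD i 0 = if i < n then f i else 0 := by
  split_ifs with h
  · rw [List.getD_eq_getElem _ _ (by simpa using h)]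
    simp
  · exact List.getD_eq_default _ _ (by simpa using Nat.le_of_not_lt h)

lemma getD_append (l l' : List ℕ) (i : ℕ) :
    (l ++ l').getD i 0 = if i < l.length then l.getD i 0 else l'.getD (i - l.length) 0 := by
  rcases lt_or_ge i l.length with h | h
  · rw [if_pos h, List.getD_eq_getElem _ _ (by simpa using Nat.lt_of_lt_of_le h (by simp)),
      List.getD_eq_getElem _ _ h, List.getElem_append_left h]
  · rw [if_neg (not_lt.2 h)]
    rcases lt_or_ge i (l ++ l').length with h2 | h2
    · rw [List.getD_eq_getElem _ _ h2, List.getD_eq_getElem _ _ (by simp at h2 ⊢; omega),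
        List.getElem_append_right h]
    · rw [List.getD_eq_default _ _ h2, List.getD_eq_default _ _ (by simp at h2 ⊢; omega)]

lemma getD_cons (a : ℕ) (l : List ℕ) (i : ℕ) :
    (a :: l).getD i 0 = if i = 0 then a else l.getD (i - 1) 0 := by
  cases i <;> simp

lemma sum_getD (l : List ℕ) : ∑ i ∈ Finset.range l.length, l.getD i 0 = l.sum := by
  induction l with
  | nil => simp
  | cons a t ih =>
    rw [List.length_cons, Finset.sum_range_succ']
    simp only [List.getD_cons_succ, List.getD_cons_zero, List.sum_cons, ih]
    omega

lemma sorted_of_getD (l : List ℕ)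
    (h : ∀ i, i + 1 < l.length → l.getD (i + 1) 0 ≤ l.getD i 0) : l.Pairwise (· ≥ ·) := by
  rw [← List.isChain_iff_pairwise, List.isChain_iff_getElem]
  intro i hi
  have := h i (by omega)
  rwa [List.getD_eq_getElem _ _ (by omega), List.getD_eq_getElem _ _ (by omega)] at this
  
lemma pos_iff_getD (l : List ℕ) :
    (∀ x ∈ l, 0 < x) ↔ ∀ i, i < l.length → 0 < l.getD i 0 := by
  constructor
  · intro h i hi
    rw [List.getD_eq_getElem _ _ hi]
    exact h _ (l.getElem_mem hi)
  · intro h x hx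
    obtain ⟨i, hi, rfl⟩ := List.mem_iff_getElem.1 hx
    have := h i hi
    rwa [List.getD_eq_getElem _ _ hi] at this

lemma ext_getD (l l' : List ℕ) (hlen : l.length = l'.length)
    (h : ∀ i, i < l.length → l.getD i 0 = l'.getD i 0) : l = l' := by
  apply List.ext_getElem hlen
  intro i h1 h2
  have := h i h1
  rwa [List.getD_eq_getElem _ _ h1, List.getD_eq_getElem _ _ h2] at this

/-! ### counting lemmas -/

lemma card_filter_le_range (a n : ℕ) :
    ((Finset.range n).filter fun t => a ≤ t).card = n - a := by
  have : ((Finset.range n).filter fun t => a ≤ t) = Finset.Ico a n := by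
    ext x; simp [Finset.mem_Ico]; omega
  rw [this, Nat.card_Ico]

lemma card_filter_succ_le (A C : ℕ) :
    ((Finset.range C).filter fun c => c + 1 ≤ A).card = min A C := by
  have : ((Finset.range C).filter fun c => c + 1 ≤ A) = Finset.range (min A C) := by
    ext x; simp; omega
  rw [this, Finset.card_range]

/-- count of indices with `v ≤ g i` for an antitone `g`. -/
lemma count_antitone (g : ℕ → ℕ) (N v c : ℕ)
    (hg : ∀ i j, i ≤ j → j < N → g j ≤ g i) :
    c < ((Finset.range N).filter fun i => v ≤ g i).card ↔ c < N ∧ v ≤ g c := by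
  constructor
  · intro h
    by_contra hc
    rcases le_or_gt N c with h1 | h1
    · have := Finset.card_filter_le (Finset.range N) (fun i => v ≤ g i)
      simp at this; omega
    · have hgc : g c < v := by
        rcases not_and_or.1 hc with h' | h'
        · omega
        · omega
      have hsub : ((Finset.range N).filter fun i => v ≤ g i) ⊆ Finset.range c := by
        intro i hi
        simp only [Finset.mem_filter, Finset.mem_range] at hi ⊢
        by_contra hic
        have : g i ≤ g c := hg c i (by omega) hi.1
        omega
      have := Finset.card_le_card hsub
      simp at this; omega
  · rintro ⟨h1, h2⟩
    have hsub : Finset.range (c + 1) ⊆ (Finset.range N).filter fun i => v ≤ g i := by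
      intro i hi
      simp only [Finset.mem_range] at hi
      simp only [Finset.mem_filter, Finset.mem_range]
      exact ⟨by omega, le_trans h2 (hg i c (by omega) h1)⟩
    have := Finset.card_le_card hsub
    simp at this; omega

/-- count of indices with `v ≤ g i` for a monotone `g`. -/
lemma count_monotone (g : ℕ → ℕ) (N v t : ℕ)
    (hg : ∀ i j, i ≤ j → j < N → g i ≤ g j) (ht : t < N) :
    N - t ≤ ((Finset.range N).filter fun i => v ≤ g i).card ↔ v ≤ g t := by
  constructor
  · intro h
    by_contra hc
    push_neg at hc
    have hsub : ((Finset.range N).filter fun i => v ≤ g i) ⊆ Finset.Ico (t+1) N := by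
      intro i hi
      simp only [Finset.mem_filter, Finset.mem_range] at hi
      simp only [Finset.mem_Ico]
      refine ⟨?_, hi.1⟩
      by_contra hic
      have : g i ≤ g t := hg i t (by omega) ht
      omega
    have := Finset.card_le_card hsub
    rw [Nat.card_Ico] at this; omega
  · intro h
    have hsub : Finset.Ico t N ⊆ (Finset.range N).filter fun i => v ≤ g i := by
      intro i hi
      simp only [Finset.mem_Ico] at hi
      simp only [Finset.mem_filter, Finset.mem_range]
      exact ⟨hi.2, le_trans h (hg t i hi.1 hi.2)⟩
    have := Finset.card_le_card hsub
    rwa [Nat.card_Ico] at this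

lemma sum_count_comm (C N : ℕ) (P : ℕ → ℕ → Prop) [∀ c t, Decidable (P c t)] :
    ∑ c ∈ Finset.range C, ((Finset.range N).filter fun t => P c t).card
      = ∑ t ∈ Finset.range N, ((Finset.range C).filter fun c => P c t).card := by
  simp only [Finset.card_filter]
  exact Finset.sum_comm



/-- The unimodal-side predicate (matches the subtype in `u`). -/
def UniP (m : ℤ) (n : ℕ) (l : List ℕ) : Prop :=
  l.sum = n ∧ (∀ x ∈ l, 0 < x) ∧
  ∃ k : ℕ, k < l.length ∧
    (∀ i : ℕ, i + 1 ≤ k → l.getD i 0 < l.getD (i + 1) 0) ∧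
    (∀ i : ℕ, k ≤ i → i + 1 < l.length → l.getD (i + 1) 0 < l.getD i 0) ∧
    (l.length : ℤ) - 2 * ((k : ℤ) + 1) + 1 = m

/-- The partition-side predicate (matches the subtype in `stmt3`). -/
def ParP (m n : ℕ) (l : List ℕ) : Prop :=
  IsPartition l n ∧
  rankL l ≤ (if m = 0 then 0 else -(m : ℤ) - 1) ∧
  InRankSet l ((m : ℤ) - 1) ∧
  (∀ k : ℕ, 1 ≤ k → k < m → l.getD k 0 < l.getD (k - 1) 0)

/-- Forward map with explicit peak-count `kk` (number of entries up to and
including the peak). -/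
def fwdAux (m kk : ℕ) (l : List ℕ) : List ℕ :=
  ((List.range (l.length - kk)).map fun i => l.getD (kk + i) 0 + (i + 1 - m))
  ++ kk :: ((List.range (l.getD (kk - 1) 0 - kk)).map fun c =>
      ((Finset.range kk).filter fun t => t + c + 2 ≤ l.getD t 0).card)

def fwd (m : ℕ) (l : List ℕ) : List ℕ := fwdAux m ((l.length + 1 - m) / 2) l

lemma jIdx_ex (m : ℕ) (l : List ℕ) : ∃ j, l.getD j 0 + m ≤ j + 1 :=
  ⟨l.length + m, by rw [List.getD_eq_default _ _ (by omega)]; omega⟩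

/-- The `m`-Durfee-type index `j`: least `j` with `λ_{j+1} ≤ j + 1 - m`. -/
def jIdx (m : ℕ) (l : List ℕ) : ℕ := Nat.find (jIdx_ex m l)

/-- Backward map with explicit `j` and `kk = λ_{j+1}`. -/
def bwdAux (m j kk : ℕ) (l : List ℕ) : List ℕ :=
  ((List.range kk).map fun t =>
      t + 1 + ((Finset.range (l.length - (j + 1))).filter
        fun r => kk - t ≤ l.getD (j + 1 + r) 0).card)
  ++ (List.range j).map fun i => l.getD i 0 - (i + 1 - m)

def bwd (m : ℕ) (l : List ℕ) : List ℕ := bwdAux m (jIdx m l) (l.getD (jIdx m l) 0) l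


lemma sum_range_split (f : ℕ → ℕ) (a b : ℕ) :
    ∑ i ∈ Finset.range (a + b), f i
      = ∑ i ∈ Finset.range a, f i + ∑ i ∈ Finset.range b, f (a + i) := by
  induction b with
  | zero => simp
  | succ b ih =>
    rw [show a + (b + 1) = (a + b) + 1 by omega, Finset.sum_range_succ, ih,
      Finset.sum_range_succ]
    ring

lemma sumshift (a b : ℕ) :
    ∑ i ∈ Finset.range (a + b), (i + 1 - b) = ∑ i ∈ Finset.range a, (i + 1) := by
  induction a with
  | zero =>
    simp only [Nat.zero_add, Finset.range_zero, Finset.sum_empty]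
    apply Finset.sum_eq_zero
    intro i hi
    simp only [Finset.mem_range] at hi
    omega
  | succ a ih =>
    have : a + 1 + b = (a + b) + 1 := by omega
    rw [this, Finset.sum_range_succ, ih, Finset.sum_range_succ]
    omega

lemma getD_antitone {l : List ℕ} (hs : l.Pairwise (· ≥ ·)) {i i' : ℕ} (h : i ≤ i') :
    l.getD i' 0 ≤ l.getD i 0 := by
  rcases lt_or_ge i' l.length with h2 | h2
  · rcases eq_or_lt_of_le h with rfl | h3
    · rfl
    · rw [List.getD_eq_getElem _ _ h2, List.getD_eq_getElem _ _ (by omega)]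
      exact List.pairwise_iff_getElem.1 hs _ _ _ _ h3
  · rw [List.getD_eq_default _ _ h2]
    exact Nat.zero_le _

lemma headD_eq_getD (l : List ℕ) : l.headD 0 = l.getD 0 0 := by cases l <;> simp

lemma fwdAux_length (m kk : ℕ) (l : List ℕ) :
    (fwdAux m kk l).length = (l.length - kk) + 1 + (l.getD (kk - 1) 0 - kk) := by
  simp [fwdAux]
  omega

lemma fwdAux_getD (m kk : ℕ) (l : List ℕ) (i : ℕ) :
    (fwdAux m kk l).getD i 0 =
      if i < l.length - kk then l.getD (kk + i) 0 + (i + 1 - m)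
      else if i = l.length - kk then kk
      else if i < (l.length - kk) + 1 + (l.getD (kk - 1) 0 - kk) then
        ((Finset.range kk).filter
          fun t => t + (i - (l.length - kk) - 1) + 2 ≤ l.getD t 0).card
      else 0 := by
  rw [fwdAux, getD_append]
  simp only [List.length_map, List.length_range]
  split_ifs with h1 h2 h3
  · rw [getD_map_range _ _ _, if_pos h1]
  · rw [getD_cons, if_pos (by omega)]
  · rw [getD_cons, if_neg (by omega), getD_map_range,
      if_pos (by omega)]
  · rw [getD_cons, if_neg (by omega), getD_map_range,
      if_neg (by omega)]

lemma bwdAux_length (m j kk : ℕ) (l : List ℕ) : (bwdAux m j kk l).length = kk + j := by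
  simp [bwdAux]

lemma bwdAux_getD (m j kk : ℕ) (l : List ℕ) (i : ℕ) :
    (bwdAux m j kk l).getD i 0 =
      if i < kk then
        i + 1 + ((Finset.range (l.length - (j + 1))).filter
          fun r => kk - i ≤ l.getD (j + 1 + r) 0).card
      else if i < kk + j then l.getD (i - kk) 0 - (i - kk + 1 - m)
      else 0 := by
  rw [bwdAux, getD_append]
  simp only [List.length_map, List.length_range]
  split_ifs with h1 h2
  · rw [getD_map_range, if_pos h1]
  · rw [getD_map_range, if_pos (by omega)]
  · rw [getD_map_range, if_neg (by omega)]

theorem fwd_mem {m n : ℕ} {l : List ℕ} (h : UniP (m : ℤ) n l) : ParP m n (fwd m l) := by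
  obtain ⟨hsum, hpos, k, hk, hinc, hdec, hr⟩ := h
  have hL : l.length = 2 * k + 1 + m := by push_cast at hr; omega
  have hkk : (l.length + 1 - m) / 2 = k + 1 := by omega
  rw [fwd, hkk]
  have hposD : ∀ i, i < l.length → 1 ≤ l.getD i 0 := fun i hi => (pos_iff_getD l).1 hpos i hi
  have hincD : ∀ d t, t + d ≤ k → l.getD t 0 + d ≤ l.getD (t + d) 0 := by
    intro d
    induction d with
    | zero => intro t _; simp
    | succ d ih =>
      intro t htd
      have h1 := ih t (by omega)
      have h2 := hinc (t + d) (by omega)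
      have h3 : t + (d + 1) = t + d + 1 := by omega
      rw [h3]
      omega
  have hpeak : ∀ t, t ≤ k → t + 1 ≤ l.getD t 0 := by
    intro t ht
    have h0 := hposD 0 (by omega)
    have h1 := hincD t 0 (by omega)
    rw [Nat.zero_add] at h1
    omega
  have hP : k + 1 ≤ l.getD k 0 := hpeak k le_rfl
  set C := l.getD k 0 - (k + 1) with hC
  have hs : l.length - (k + 1) = k + m := by omega
  have hF : ∀ i, (fwdAux m (k + 1) l).getD i 0 =
      if i < k + m then l.getD (k + 1 + i) 0 + (i + 1 - m)
      else if i = k + m then k + 1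
      else if i < k + m + 1 + C then
        ((Finset.range (k + 1)).filter fun t => t + (i - (k + m) - 1) + 2 ≤ l.getD t 0).card
      else 0 := by
    intro i
    rw [fwdAux_getD]
    simp only [hs, show k + 1 - 1 = k from rfl, ← hC]
  have hFlen : (fwdAux m (k + 1) l).length = k + m + 1 + C := by
    rw [fwdAux_length]
    simp only [hs, show k + 1 - 1 = k from rfl, ← hC]
  have hbpos : ∀ i, i < k + m → 1 ≤ l.getD (k + 1 + i) 0 := by
    intro i hi; exact hposD _ (by omega)
  have hbdec : ∀ i, i + 1 < k + m → l.getD (k + 1 + (i + 1)) 0 < l.getD (k + 1 + i) 0 := by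
    intro i hi
    have h1 := hdec (k + 1 + i) (by omega) (by omega)
    rwa [show k + 1 + i + 1 = k + 1 + (i + 1) from rfl] at h1
  refine ⟨⟨?_, ?_, ?_⟩, ?_, ?_, ?_⟩
  · -- sorted
    apply sorted_of_getD
    intro i hi
    rw [hFlen] at hi
    rw [hF i, hF (i + 1)]
    by_cases c1 : i + 1 < k + m
    · have := hbdec i c1
      split_ifs <;> omega
    · by_cases c2 : i + 1 = k + m
      · have h1 := hbpos i (by omega)
        split_ifs <;> omega
      · by_cases c3 : i = k + m
        · have hcard : ((Finset.range (k + 1)).filter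
              fun t => t + (i + 1 - (k + m) - 1) + 2 ≤ l.getD t 0).card ≤ k + 1 := by
            calc ((Finset.range (k + 1)).filter
                fun t => t + (i + 1 - (k + m) - 1) + 2 ≤ l.getD t 0).card
                ≤ (Finset.range (k + 1)).card := Finset.card_filter_le _ _
              _ = k + 1 := Finset.card_range _
          split_ifs <;> omega
        · have hcard : ((Finset.range (k + 1)).filter
              fun t => t + (i + 1 - (k + m) - 1) + 2 ≤ l.getD t 0).card
              ≤ ((Finset.range (k + 1)).filter
              fun t => t + (i - (k + m) - 1) + 2 ≤ l.getD t 0).card := by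
            apply Finset.card_le_card
            intro t ht
            simp only [Finset.mem_filter, Finset.mem_range] at ht ⊢
            exact ⟨ht.1, by omega⟩
          split_ifs <;> omega
  · -- positive
    rw [pos_iff_getD]
    intro i hi
    rw [hFlen] at hi
    rw [hF i]
    by_cases c1 : i < k + m
    · have := hbpos i c1
      split_ifs <;> omega
    · by_cases c2 : i = k + m
      · split_ifs <;> omega
      · have hcard : 0 < ((Finset.range (k + 1)).filter
            fun t => t + (i - (k + m) - 1) + 2 ≤ l.getD t 0).card := by
          apply Finset.card_pos.2
          refine ⟨k, ?_⟩
          simp only [Finset.mem_filter, Finset.mem_range]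
          exact ⟨by omega, by omega⟩
        split_ifs <;> omega
  · -- sum
    rw [← sum_getD, hFlen]
    have T1 : ∑ i ∈ Finset.range (k + m), (fwdAux m (k + 1) l).getD i 0
        = (∑ i ∈ Finset.range (k + m), l.getD (k + 1 + i) 0) + ∑ i ∈ Finset.range k, (i + 1) := by
      rw [← sumshift k m, ← Finset.sum_add_distrib]
      refine Finset.sum_congr rfl fun i hi => ?_
      simp only [Finset.mem_range] at hi
      rw [hF i, if_pos hi]
    have T2 : ∑ i ∈ Finset.range 1, (fwdAux m (k + 1) l).getD (k + m + i) 0 = k + 1 := by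
      rw [Finset.sum_range_one]
      simp only [Nat.add_zero]
      rw [hF, if_neg (show ¬ (k + m < k + m) from by omega), if_pos rfl]
    have T3 : ∑ i ∈ Finset.range C, (fwdAux m (k + 1) l).getD (k + m + (1 + i)) 0
        = ∑ t ∈ Finset.range (k + 1), (l.getD t 0 - (t + 1)) := by
      have e : ∀ i ∈ Finset.range C, (fwdAux m (k + 1) l).getD (k + m + (1 + i)) 0
          = ((Finset.range (k + 1)).filter fun t => t + i + 2 ≤ l.getD t 0).card := by
        intro i hi
        simp only [Finset.mem_range] at hi
        rw [hF, if_neg (show ¬ (k + m + (1 + i) < k + m) from by omega),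
          if_neg (show ¬ (k + m + (1 + i) = k + m) from by omega),
          if_pos (show k + m + (1 + i) < k + m + 1 + C from by omega)]
        have h2 : k + m + (1 + i) - (k + m) - 1 = i := by omega
        simp only [h2]
      rw [Finset.sum_congr rfl e, sum_count_comm C (k + 1) (fun c t => t + c + 2 ≤ l.getD t 0)]
      refine Finset.sum_congr rfl fun t ht => ?_
      simp only [Finset.mem_range] at ht
      have hgap : l.getD t 0 + (k - t) ≤ l.getD k 0 := by
        have h3 := hincD (k - t) t (by omega)
        rwa [show t + (k - t) = k from by omega] at h3
      have e2 : ((Finset.range C).filter fun c => t + c + 2 ≤ l.getD t 0)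
          = (Finset.range C).filter fun c => c + 1 ≤ l.getD t 0 - (t + 1) := by
        ext c; simp only [Finset.mem_filter, Finset.mem_range]
        constructor <;> (rintro ⟨h1, h2⟩; exact ⟨h1, by omega⟩)
      rw [e2, card_filter_succ_le]
      omega
    rw [show k + m + 1 + C = (k + m) + (1 + C) from by omega,
      sum_range_split _ (k + m) (1 + C),
      sum_range_split (fun i => (fwdAux m (k + 1) l).getD (k + m + i) 0) 1 C]
    rw [T1, T2, T3]
    have hsplit : ∑ i ∈ Finset.range ((k + 1) + (k + m)), l.getD i 0
        = (∑ t ∈ Finset.range (k + 1), l.getD t 0)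
          + ∑ i ∈ Finset.range (k + m), l.getD (k + 1 + i) 0 :=
      sum_range_split _ (k + 1) (k + m)
    rw [show (k + 1) + (k + m) = l.length from by omega, sum_getD, hsum] at hsplit
    have htsum : (∑ t ∈ Finset.range (k + 1), (l.getD t 0 - (t + 1)))
          + ∑ t ∈ Finset.range (k + 1), (t + 1)
        = ∑ t ∈ Finset.range (k + 1), l.getD t 0 := by
      rw [← Finset.sum_add_distrib]
      refine Finset.sum_congr rfl fun t ht => ?_
      simp only [Finset.mem_range] at ht
      have := hpeak t (by omega)
      omega
    rw [Finset.sum_range_succ (fun t => t + 1) k] at htsum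
    omega
  · -- rank
    rw [rankL, headD_eq_getD, hF 0, hFlen]
    by_cases c1 : 0 < k + m
    · have hb0 : l.getD (k + 1 + 0) 0 < l.getD k 0 := by
        have := hdec k le_rfl (by omega)
        rwa [show k + 1 = k + 1 + 0 from rfl] at this
      rw [if_pos c1]
      split_ifs with hm <;> omega
    · rw [if_neg c1, if_pos (show (0 : ℕ) = k + m from by omega)]
      split_ifs with hm <;> omega
  · -- rank set
    refine ⟨k + m, ?_⟩
    rw [hF (k + m), if_neg (show ¬ (k + m < k + m) from by omega), if_pos rfl]
    push_cast
    ring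
  · -- strict first m parts
    intro q h1 h2
    have hd : l.getD (k + 1 + q) 0 < l.getD (k + 1 + (q - 1)) 0 := by
      have h3 := hdec (k + q) (by omega) (by omega)
      rwa [show k + q + 1 = k + 1 + q from by omega,
        show k + q = k + 1 + (q - 1) from by omega] at h3
    rw [hF q, hF (q - 1), if_pos (show q < k + m from by omega),
      if_pos (show q - 1 < k + m from by omega)]
    omega

lemma jIdx_spec {m n : ℕ} {l : List ℕ} (h : ParP m n l) :
    l.getD (jIdx m l) 0 + m = jIdx m l + 1 ∧ 1 ≤ l.getD (jIdx m l) 0 ∧ jIdx m l < l.length := by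
  obtain ⟨⟨hsort, hpos, hsum⟩, hrank, ⟨j0, hj0⟩, hstrict⟩ := h
  have hj0' : l.getD j0 0 + m = j0 + 1 := by omega
  have hfind : l.getD (jIdx m l) 0 + m ≤ jIdx m l + 1 := Nat.find_spec (jIdx_ex m l)
  have hle : jIdx m l ≤ j0 := Nat.find_min' _ (by omega)
  have hanti : l.getD j0 0 ≤ l.getD (jIdx m l) 0 := getD_antitone hsort hle
  have heq : l.getD (jIdx m l) 0 + m = jIdx m l + 1 := by
    rcases eq_or_lt_of_le hle with he | hlt
    · rw [he]; exact hj0'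
    · omega
  have hkkpos : 1 ≤ l.getD (jIdx m l) 0 := by
    by_contra h0
    have h0' : l.getD (jIdx m l) 0 = 0 := by omega
    have hm1 : 1 ≤ m := by omega
    rw [if_neg (show ¬ m = 0 from by omega)] at hrank
    rw [rankL, headD_eq_getD] at hrank
    have hh : (0 : ℤ) ≤ (l.getD 0 0 : ℤ) := by positivity
    have hlen : m + 1 ≤ l.length := by omega
    have := (pos_iff_getD l).1 hpos (jIdx m l) (by omega)
    omega
  have hjlen : jIdx m l < l.length := by
    by_contra hh
    have := List.getD_eq_default l 0 (show l.length ≤ jIdx m l from by omega)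
    omega
  exact ⟨heq, hkkpos, hjlen⟩

theorem bwd_mem {m n : ℕ} {l : List ℕ} (h : ParP m n l) : UniP (m : ℤ) n (bwd m l) := by
  obtain ⟨heq, hkkpos, hjlen⟩ := jIdx_spec h
  obtain ⟨⟨hsort, hpos, hsum⟩, hrank, hrs, hstrict⟩ := h
  rw [bwd]
  set j := jIdx m l with hjdef
  set kk := l.getD j 0 with hkkdef
  set R := l.length - (j + 1) with hR
  have hanti : ∀ i i', i ≤ i' → l.getD i' 0 ≤ l.getD i 0 := fun _ _ hii => getD_antitone hsort hii
  have hposD : ∀ i, i < l.length → 1 ≤ l.getD i 0 := fun i hi => (pos_iff_getD l).1 hpos i hi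
  have hB : ∀ i, (bwdAux m j kk l).getD i 0 =
      if i < kk then i + 1 +
        ((Finset.range R).filter fun r => kk - i ≤ l.getD (j + 1 + r) 0).card
      else if i < kk + j then l.getD (i - kk) 0 - (i - kk + 1 - m) else 0 := by
    intro i
    rw [bwdAux_getD]
  have hBlen : (bwdAux m j kk l).length = kk + j := bwdAux_length m j kk l
  have hcntmono : ∀ i i', i ≤ i' →
      ((Finset.range R).filter fun r => kk - i ≤ l.getD (j + 1 + r) 0).card ≤
      ((Finset.range R).filter fun r => kk - i' ≤ l.getD (j + 1 + r) 0).card := by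
    intro i i' hii
    apply Finset.card_le_card
    intro r hr
    simp only [Finset.mem_filter] at hr ⊢
    exact ⟨hr.1, by omega⟩
  have hst : ∀ x, x + 1 < m → l.getD (x + 1) 0 < l.getD x 0 := by
    intro x hx
    have := hstrict (x + 1) (by omega) hx
    simpa using this
  refine ⟨?_, ?_, kk - 1, ?_, ?_, ?_, ?_⟩
  · -- sum
    rw [← sum_getD, hBlen, sum_range_split _ kk j]
    have T1 : ∑ t ∈ Finset.range kk, (bwdAux m j kk l).getD t 0
        = (∑ t ∈ Finset.range kk, (t + 1))
          + ∑ r ∈ Finset.range R, l.getD (j + 1 + r) 0 := by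
      have e : ∀ t ∈ Finset.range kk, (bwdAux m j kk l).getD t 0
          = (t + 1) + ((Finset.range R).filter fun r => kk - t ≤ l.getD (j + 1 + r) 0).card := by
        intro t ht
        simp only [Finset.mem_range] at ht
        rw [hB, if_pos ht]
      rw [Finset.sum_congr rfl e, Finset.sum_add_distrib]
      congr 1
      rw [sum_count_comm kk R (fun t r => kk - t ≤ l.getD (j + 1 + r) 0)]
      refine Finset.sum_congr rfl fun r hr => ?_
      simp only [Finset.mem_range] at hr
      have hρ : l.getD (j + 1 + r) 0 ≤ kk := hanti j (j + 1 + r) (by omega)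
      have e2 : ((Finset.range kk).filter fun t => kk - t ≤ l.getD (j + 1 + r) 0)
          = (Finset.range kk).filter fun t => kk - l.getD (j + 1 + r) 0 ≤ t := by
        ext t; simp only [Finset.mem_filter, Finset.mem_range]
        constructor <;> (rintro ⟨h1, h2⟩; exact ⟨h1, by omega⟩)
      rw [e2, card_filter_le_range]
      omega
    have T2 : ∑ i ∈ Finset.range j, (bwdAux m j kk l).getD (kk + i) 0
          + ∑ i ∈ Finset.range j, (i + 1 - m)
        = ∑ i ∈ Finset.range j, l.getD i 0 := by
      rw [← Finset.sum_add_distrib]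
      refine Finset.sum_congr rfl fun i hi => ?_
      simp only [Finset.mem_range] at hi
      rw [hB, if_neg (show ¬ kk + i < kk from by omega),
        if_pos (show kk + i < kk + j from by omega)]
      simp only [show kk + i - kk = i from by omega]
      have h1 : l.getD j 0 ≤ l.getD i 0 := hanti i j (by omega)
      omega
    have T3 : ∑ i ∈ Finset.range j, (i + 1 - m) = ∑ i ∈ Finset.range (kk - 1), (i + 1) := by
      rw [show j = (kk - 1) + m from by omega, sumshift]
    have hG : ∑ t ∈ Finset.range kk, (t + 1)
        = (∑ t ∈ Finset.range (kk - 1), (t + 1)) + kk := by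
      have h5 := Finset.sum_range_succ (fun t => t + 1) (kk - 1)
      rwa [show kk - 1 + 1 = kk from by omega] at h5
    have hsplit : ∑ i ∈ Finset.range (j + (1 + R)), l.getD i 0
        = (∑ i ∈ Finset.range j, l.getD i 0)
          + ∑ r ∈ Finset.range (1 + R), l.getD (j + r) 0 := sum_range_split _ j (1 + R)
    have hsplit2 : ∑ r ∈ Finset.range (1 + R), l.getD (j + r) 0
        = l.getD (j + 0) 0 + ∑ r ∈ Finset.range R, l.getD (j + (1 + r)) 0 := by
      rw [sum_range_split (fun r => l.getD (j + r) 0) 1 R, Finset.sum_range_one]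
    have hsplit3 : ∑ r ∈ Finset.range R, l.getD (j + (1 + r)) 0
        = ∑ r ∈ Finset.range R, l.getD (j + 1 + r) 0 := by
      refine Finset.sum_congr rfl fun r hr => ?_
      rw [show j + (1 + r) = j + 1 + r from by omega]
    rw [show j + (1 + R) = l.length from by omega, sum_getD, hsum] at hsplit
    rw [hsplit2, hsplit3, show j + 0 = j from by omega] at hsplit
    rw [T1, hG]
    omega
  · -- positivity
    rw [pos_iff_getD]
    intro i hi
    rw [hBlen] at hi
    rw [hB]
    by_cases c1 : i < kk
    · rw [if_pos c1]; omega
    · rw [if_neg c1, if_pos (by omega)]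
      have h1 : l.getD j 0 ≤ l.getD (i - kk) 0 := hanti (i - kk) j (by omega)
      have h2 := hposD (i - kk) (by omega)
      omega
  · -- peak index in range
    rw [hBlen]; omega
  · -- increasing
    intro i hi1
    rw [hB, hB, if_pos (show i < kk from by omega), if_pos (show i + 1 < kk from by omega)]
    have := hcntmono i (i + 1) (by omega)
    omega
  · -- decreasing
    intro i hi1 hi2
    rw [hBlen] at hi2
    rw [hB, hB]
    by_cases c1 : i + 1 = kk
    · -- boundary: peak vs first of D
      rw [if_pos (show i < kk from by omega), if_neg (show ¬ i + 1 < kk from by omega),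
        if_pos (show i + 1 < kk + j from by omega)]
      have hct : ((Finset.range R).filter fun r => kk - i ≤ l.getD (j + 1 + r) 0).card = R := by
        rw [Finset.filter_true_of_mem, Finset.card_range]
        intro r hr
        simp only [Finset.mem_range] at hr
        have := hposD (j + 1 + r) (by omega)
        omega
      rw [hct]
      simp only [show i + 1 - kk = 0 from by omega]
      rw [rankL, headD_eq_getD] at hrank
      by_cases hm : m = 0
      · rw [if_pos hm] at hrank
        omega
      · rw [if_neg hm] at hrank
        omega
    · -- inside D
      have hc2 : kk ≤ i := by omega
      obtain ⟨x, rfl⟩ : ∃ x, i = kk + x := ⟨i - kk, by omega⟩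
      rw [if_neg (show ¬ kk + x < kk from by omega),
        if_neg (show ¬ kk + x + 1 < kk from by omega),
        if_pos (show kk + x < kk + j from by omega),
        if_pos (show kk + x + 1 < kk + j from by omega)]
      simp only [show kk + x - kk = x from by omega, show kk + x + 1 - kk = x + 1 from by omega]
      by_cases hxm : x + 2 ≤ m
      · have := hst x (by omega)
        omega
      · have h1 : l.getD (x + 1) 0 ≤ l.getD x 0 := hanti x (x + 1) (by omega)
        have h2 : l.getD j 0 ≤ l.getD (x + 1) 0 := hanti (x + 1) j (by omega)
        omega
  · -- rank equation
    rw [hBlen]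
    push_cast [show ((kk - 1 : ℕ) : ℤ) = (kk : ℤ) - 1 from by omega]
    omega

theorem bwd_fwd {m n : ℕ} {l : List ℕ} (h : UniP (m : ℤ) n l) : bwd m (fwd m l) = l := by
  obtain ⟨hsum, hpos, k, hk, hinc, hdec, hr⟩ := h
  have hL : l.length = 2 * k + 1 + m := by push_cast at hr; omega
  have hkk : (l.length + 1 - m) / 2 = k + 1 := by omega
  rw [fwd, hkk]
  have hposD : ∀ i, i < l.length → 1 ≤ l.getD i 0 := fun i hi => (pos_iff_getD l).1 hpos i hi
  have hincD : ∀ d t, t + d ≤ k → l.getD t 0 + d ≤ l.getD (t + d) 0 := by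
    intro d
    induction d with
    | zero => intro t _; simp
    | succ d ih =>
      intro t htd
      have h1 := ih t (by omega)
      have h2 := hinc (t + d) (by omega)
      have h3 : t + (d + 1) = t + d + 1 := by omega
      rw [h3]
      omega
  have hpeak : ∀ t, t ≤ k → t + 1 ≤ l.getD t 0 := by
    intro t ht
    have h0 := hposD 0 (by omega)
    have h1 := hincD t 0 (by omega)
    rw [Nat.zero_add] at h1
    omega
  have hP : k + 1 ≤ l.getD k 0 := hpeak k le_rfl
  set C := l.getD k 0 - (k + 1) with hC
  have hs : l.length - (k + 1) = k + m := by omega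
  set w := fwdAux m (k + 1) l with hw
  have hF : ∀ i, w.getD i 0 =
      if i < k + m then l.getD (k + 1 + i) 0 + (i + 1 - m)
      else if i = k + m then k + 1
      else if i < k + m + 1 + C then
        ((Finset.range (k + 1)).filter fun t => t + (i - (k + m) - 1) + 2 ≤ l.getD t 0).card
      else 0 := by
    intro i
    rw [hw, fwdAux_getD]
    simp only [hs, show k + 1 - 1 = k from rfl, ← hC]
  have hFlen : w.length = k + m + 1 + C := by
    rw [hw, fwdAux_length]
    simp only [hs, show k + 1 - 1 = k from rfl, ← hC]
  have hbpos : ∀ i, i < k + m → 1 ≤ l.getD (k + 1 + i) 0 := by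
    intro i hi; exact hposD _ (by omega)
  have hjF : jIdx m w = k + m := by
    rw [jIdx, Nat.find_eq_iff]
    constructor
    · rw [hF (k + m), if_neg (show ¬ (k + m < k + m) from by omega), if_pos rfl]
      omega
    · intro j' hj'
      rw [hF j', if_pos hj']
      have := hbpos j' hj'
      omega
  have hkkF : w.getD (k + m) 0 = k + 1 := by
    rw [hF (k + m), if_neg (show ¬ (k + m < k + m) from by omega), if_pos rfl]
  rw [bwd, hjF, hkkF]
  apply ext_getD
  · rw [bwdAux_length]; omega
  · intro i hi
    rw [bwdAux_length] at hi
    rw [bwdAux_getD]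
    by_cases c1 : i < k + 1
    · rw [if_pos c1]
      have hwlen : w.length - (k + m + 1) = C := by rw [hFlen]; omega
      rw [hwlen]
      have hgmono : ∀ t t', t ≤ t' → t' < k + 1 →
          l.getD t 0 - (t + 1) ≤ l.getD t' 0 - (t' + 1) := by
        intro t t' htt' ht'
        have h1 := hincD (t' - t) t (by omega)
        rw [show t + (t' - t) = t' from by omega] at h1
        omega
      have ecnt : ∀ r, r < C →
          (k + 1 - i ≤ w.getD (k + m + 1 + r) 0 ↔ r + 1 ≤ l.getD i 0 - (i + 1)) := by
        intro r hr
        rw [hF (k + m + 1 + r), if_neg (show ¬ (k + m + 1 + r < k + m) from by omega),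
          if_neg (show ¬ (k + m + 1 + r = k + m) from by omega),
          if_pos (show k + m + 1 + r < k + m + 1 + C from by omega)]
        simp only [show k + m + 1 + r - (k + m) - 1 = r from by omega]
        have e2 : ((Finset.range (k + 1)).filter fun t => t + r + 2 ≤ l.getD t 0)
            = (Finset.range (k + 1)).filter fun t => r + 1 ≤ l.getD t 0 - (t + 1) := by
          ext t
          simp only [Finset.mem_filter, Finset.mem_range]
          constructor <;> (rintro ⟨h1, h2⟩; exact ⟨h1, by omega⟩)
        rw [e2]
        exact count_monotone (fun t => l.getD t 0 - (t + 1)) (k + 1) (r + 1) i hgmono c1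
      have e3 : ((Finset.range C).filter fun r => k + 1 - i ≤ w.getD (k + m + 1 + r) 0)
          = (Finset.range C).filter fun r => r + 1 ≤ l.getD i 0 - (i + 1) := by
        ext r
        simp only [Finset.mem_filter, Finset.mem_range]
        constructor
        · rintro ⟨h1, h2⟩; exact ⟨h1, (ecnt r h1).1 h2⟩
        · rintro ⟨h1, h2⟩; exact ⟨h1, (ecnt r h1).2 h2⟩
      rw [e3, card_filter_succ_le]
      have hgap : l.getD i 0 + (k - i) ≤ l.getD k 0 := by
        have h1 := hincD (k - i) i (by omega)
        rwa [show i + (k - i) = k from by omega] at h1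
      have hpi := hpeak i (by omega)
      omega
    · rw [if_neg c1, if_pos (by omega)]
      obtain ⟨x, rfl⟩ : ∃ x, i = (k + 1) + x := ⟨i - (k + 1), by omega⟩
      simp only [show k + 1 + x - (k + 1) = x from by omega]
      rw [hF x, if_pos (show x < k + m from by omega)]
      omega

theorem fwd_bwd {m n : ℕ} {l : List ℕ} (h : ParP m n l) : fwd m (bwd m l) = l := by
  obtain ⟨heq, hkkpos, hjlen⟩ := jIdx_spec h
  obtain ⟨⟨hsort, hpos, hsum⟩, hrank, hrs, hstrict⟩ := h
  rw [bwd]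
  set j := jIdx m l with hjdef
  set kk := l.getD j 0 with hkkdef
  set R := l.length - (j + 1) with hR
  have hanti : ∀ i i', i ≤ i' → l.getD i' 0 ≤ l.getD i 0 := fun _ _ hii => getD_antitone hsort hii
  have hposD : ∀ i, i < l.length → 1 ≤ l.getD i 0 := fun i hi => (pos_iff_getD l).1 hpos i hi
  set b := bwdAux m j kk l with hb
  have hB : ∀ i, b.getD i 0 =
      if i < kk then i + 1 +
        ((Finset.range R).filter fun r => kk - i ≤ l.getD (j + 1 + r) 0).card
      else if i < kk + j then l.getD (i - kk) 0 - (i - kk + 1 - m) else 0 := by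
    intro i
    rw [hb, bwdAux_getD]
  have hBlen : b.length = kk + j := bwdAux_length m j kk l
  rw [fwd]
  have hkk2 : (b.length + 1 - m) / 2 = kk := by rw [hBlen]; omega
  rw [hkk2]
  have hctop : b.getD (kk - 1) 0 = kk + R := by
    rw [hB, if_pos (show kk - 1 < kk from by omega)]
    have e : ((Finset.range R).filter fun r => kk - (kk - 1) ≤ l.getD (j + 1 + r) 0)
        = Finset.range R := by
      apply Finset.filter_true_of_mem
      intro r hr
      simp only [Finset.mem_range] at hr
      have := hposD (j + 1 + r) (by omega)
      omega
    rw [e, Finset.card_range]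
    omega
  have hFlen2 : (fwdAux m kk b).length = j + 1 + R := by
    rw [fwdAux_length, hBlen, hctop]
    omega
  apply ext_getD
  · rw [hFlen2]; omega
  · intro i hi
    rw [hFlen2] at hi
    rw [fwdAux_getD]
    simp only [hBlen, hctop, show kk + j - kk = j from by omega,
      show kk + R - kk = R from by omega]
    by_cases c1 : i < j
    · rw [if_pos c1, hB, if_neg (show ¬ kk + i < kk from by omega),
        if_pos (show kk + i < kk + j from by omega)]
      simp only [show kk + i - kk = i from by omega]
      have h1 : kk ≤ l.getD i 0 := hanti i j (by omega)
      omega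
    · by_cases c2 : i = j
      · rw [if_neg c1, if_pos c2, c2]
      · rw [if_neg c1, if_neg c2, if_pos (show i < j + 1 + R from hi)]
        have hcR : i - j - 1 < R := by omega
        have hρ : l.getD (j + 1 + (i - j - 1)) 0 ≤ kk := hanti j (j + 1 + (i - j - 1)) (by omega)
        have hecnt : ∀ t, t < kk →
            (t + (i - j - 1) + 2 ≤ b.getD t 0 ↔
              kk - l.getD (j + 1 + (i - j - 1)) 0 ≤ t) := by
          intro t ht
          rw [hB, if_pos ht]
          have hca : (i - j - 1 <
              ((Finset.range R).filter fun r => kk - t ≤ l.getD (j + 1 + r) 0).card ↔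
              (i - j - 1 < R ∧ kk - t ≤ l.getD (j + 1 + (i - j - 1)) 0)) :=
            count_antitone _ R (kk - t) (i - j - 1)
              (fun r r' hrr' _ => hanti (j + 1 + r) (j + 1 + r') (by omega))
          omega
        have e4 : ((Finset.range kk).filter fun t => t + (i - j - 1) + 2 ≤ b.getD t 0)
            = (Finset.range kk).filter
              fun t => kk - l.getD (j + 1 + (i - j - 1)) 0 ≤ t := by
          ext t
          simp only [Finset.mem_filter, Finset.mem_range]
          constructor
          · rintro ⟨h1, h2⟩; exact ⟨h1, (hecnt t h1).1 h2⟩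
          · rintro ⟨h1, h2⟩; exact ⟨h1, (hecnt t h1).2 h2⟩
        rw [e4, card_filter_le_range]
        have h5 : l.getD (j + 1 + (i - j - 1)) 0 = l.getD i 0 := by
          rw [show j + 1 + (i - j - 1) = i from by omega]
        omega


end StrUni

namespace StrUni

theorem stmt3 (m n : ℕ) :
    u (m : ℤ) n =
      Nat.card {l : List ℕ //
        IsPartition l n ∧
        rankL l ≤ (if m = 0 then 0 else -(m : ℤ) - 1) ∧
        InRankSet l ((m : ℤ) - 1) ∧
        (∀ k : ℕ, 1 ≤ k → k < m → l.getD k 0 < l.getD (k - 1) 0)} := by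
  refine Nat.card_congr ⟨fun x => ⟨fwd m x.1, fwd_mem x.2⟩, fun x => ⟨bwd m x.1, bwd_mem x.2⟩,
    fun x => Subtype.ext (bwd_fwd x.2), fun x => Subtype.ext (fwd_bwd x.2)⟩

end StrUni
end

section
/- Let m ≥ 0, let λ be a partition with m-Durfee rectangle size j and m-Durfee rectangle symbol (α,β)_{(m+j)×j}. Then m − 1 belongs to the rank-set of λ if and only if α_1 ≤ m + j − 1, i.e. if and only if the number of parts of λ strictly greater than j is at most m + j − 1. -/
open Nat Finset

namespace StrUni

private lemma getD_anti {l : List ℕ} (hsort : l.Pairwise (· ≥ ·)) {i i' : ℕ} (h : i ≤ i') :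
    l.getD i' 0 ≤ l.getD i 0 := by
  rcases lt_or_ge i' l.length with h' | h'
  · rw [List.getD_eq_getElem l 0 h', List.getD_eq_getElem l 0 (lt_of_le_of_lt h h')]
    rcases eq_or_lt_of_le h with rfl | hlt
    · exact le_refl _
    · exact List.pairwise_iff_get.mp hsort ⟨i, _⟩ ⟨i', _⟩ hlt
  · rw [List.getD_eq_default l 0 h']
    exact Nat.zero_le _

private lemma mem_drop_le {l : List ℕ} (hsort : l.Pairwise (· ≥ ·)) (t : ℕ) :
    ∀ x ∈ l.drop t, x ≤ l.getD t 0 := by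
  intro x hx
  obtain ⟨i, hi, rfl⟩ := List.mem_iff_getElem.mp hx
  have h1 : t + i < l.length := by simp at hi; omega
  rw [List.getElem_drop, ← List.getD_eq_getElem l 0 h1]
  exact getD_anti hsort (Nat.le_add_right t i)

private lemma mem_take_ge {l : List ℕ} (hsort : l.Pairwise (· ≥ ·)) (t : ℕ) :
    ∀ x ∈ l.take (t + 1), l.getD t 0 ≤ x := by
  intro x hx
  obtain ⟨i, hi, rfl⟩ := List.mem_iff_getElem.mp hx
  have h2 : i < l.length := by simp at hi; omega
  have h3 : i ≤ t := by simp at hi; omega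
  rw [List.getElem_take, ← List.getD_eq_getElem l 0 h2]
  exact getD_anti hsort h3

private lemma countP_take {l : List ℕ} (hsort : l.Pairwise (· ≥ ·)) {j t : ℕ}
    (h : l.getD t 0 ≤ j) :
    (l.take t).countP (fun x => decide (j < x)) = l.countP (fun x => decide (j < x)) := by
  conv_rhs => rw [← List.take_append_drop t l]
  rw [List.countP_append]
  have h1 : (l.drop t).countP (fun x => decide (j < x)) = 0 := by
    rw [List.countP_eq_zero]
    intro a ha
    simp only [decide_eq_true_eq, not_lt]
    have := mem_drop_le hsort t a ha
    omega
  omega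

private lemma countP_le_of_getD_le {l : List ℕ} (hsort : l.Pairwise (· ≥ ·)) {j t : ℕ}
    (h : l.getD t 0 ≤ j) : l.countP (fun x => decide (j < x)) ≤ t := by
  rw [← countP_take hsort h]
  calc (l.take t).countP (fun x => decide (j < x)) ≤ (l.take t).length :=
        List.countP_le_length
    _ ≤ t := by simp

private lemma lt_countP_of_lt_getD {l : List ℕ} (hsort : l.Pairwise (· ≥ ·)) {j t : ℕ}
    (h : j < l.getD t 0) : t < l.countP (fun x => decide (j < x)) := by
  have ht : t < l.length := by
    by_contra hc
    rw [List.getD_eq_default l 0 (le_of_not_gt hc)] at h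
    omega
  have h1 : (l.take (t + 1)).countP (fun x => decide (j < x)) = (l.take (t + 1)).length := by
    rw [List.countP_eq_length]
    intro a ha
    simp only [decide_eq_true_eq]
    exact lt_of_lt_of_le h (mem_take_ge hsort t a ha)
  have h2 : (l.take (t + 1)).length = t + 1 := by simp; omega
  conv_rhs => rw [← List.take_append_drop (t + 1) l]
  rw [List.countP_append, h1, h2]
  omega

private lemma getD_m_add_durfee (m : ℕ) (l : List ℕ) :
    l.getD (m + mDurfee m l) 0 ≤ mDurfee m l := by
  by_contra hc
  push_neg at hc
  have hl : m + mDurfee m l < l.length := by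
    by_contra h
    rw [List.getD_eq_default l 0 (le_of_not_gt h)] at hc
    omega
  have hP := Nat.findGreatest_is_greatest (P := fun k => k ≤ l.getD (k + m - 1) 0)
    (n := l.length) (k := mDurfee m l + 1) (by unfold mDurfee; omega) (by omega)
  apply hP
  show mDurfee m l + 1 ≤ l.getD (mDurfee m l + 1 + m - 1) 0
  rw [show mDurfee m l + 1 + m - 1 = m + mDurfee m l from by omega]
  omega

private lemma durfee_spec {m : ℕ} {l : List ℕ} (h : 0 < mDurfee m l) :
    mDurfee m l ≤ l.getD (m + mDurfee m l - 1) 0 := by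
  have h2 := (Nat.findGreatest_eq_iff (m := mDurfee m l) (k := l.length)
    (P := fun k => k ≤ l.getD (k + m - 1) 0)).mp (by unfold mDurfee; rfl)
  have h3 : mDurfee m l ≤ l.getD (mDurfee m l + m - 1) 0 := h2.2.1 (by omega)
  rwa [show mDurfee m l + m - 1 = m + mDurfee m l - 1 from by omega] at h3

private lemma alpha_head (m : ℕ) {l : List ℕ} (hsort : l.Pairwise (· ≥ ·))
    (hpos : ∀ x ∈ l, 0 < x) :
    (mAlpha m l).headD 0 = l.countP (fun x => decide (mDurfee m l < x)) := by
  rcases l with _ | ⟨a, as⟩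
  · simp [mAlpha, conjugate]
  · by_cases hmj : m + mDurfee m (a :: as) = 0
    · exfalso
      have hm : m = 0 := by omega
      subst hm
      have h1 : 1 ≤ Nat.findGreatest (fun k => k ≤ (a :: as).getD (k + 0 - 1) 0)
          (a :: as).length := by
        apply Nat.le_findGreatest (by simp)
        show 1 ≤ (a :: as).getD (1 + 0 - 1) 0
        simpa [Nat.one_le_iff_ne_zero, Nat.pos_iff_ne_zero] using hpos a (List.mem_cons_self)
      unfold mDurfee at hmj
      omega
    · have hC := getD_m_add_durfee m (a :: as)
      have hdrop := countP_take (j := mDurfee m (a :: as)) hsort hC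
      set j := mDurfee m (a :: as) with hj
      obtain ⟨n, hn⟩ : ∃ n, m + j = n + 1 := ⟨m + j - 1, by omega⟩
      have hhd : (((a :: as).take (m + j)).map (fun x => x - j)).headD 0 = a - j := by
        rw [hn]
        rfl
      unfold mAlpha conjugate
      rw [← hj, hhd]
      by_cases haj : a ≤ j
      · rw [show a - j = 0 from by omega]
        simp only [List.range_zero, List.map_nil, List.headD_nil]
        symm
        rw [List.countP_eq_zero]
        intro x hx
        simp only [decide_eq_true_eq, not_lt]
        rcases List.mem_cons.mp hx with rfl | hxas
        · omega
        · have := (List.pairwise_cons.mp hsort).1 x hxas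
          omega
      · rw [show a - j = (a - j - 1) + 1 from by omega, List.range_succ_eq_map]
        simp only [List.map_cons, List.headD_cons]
        rw [← List.countP_eq_length_filter, List.countP_map]
        have hcg := List.countP_congr (l := (a :: as).take (m + j))
          (p := (fun x => decide ((0:ℕ) < x)) ∘ (fun x => x - j))
          (q := fun x => decide (j < x))
          (fun x _ => by
            simp only [Function.comp_apply, decide_eq_true_eq]
            omega)
        rw [hcg, hdrop]

theorem stmt14 (m : ℕ) (l : List ℕ)
    (hsort : l.Pairwise (· ≥ ·)) (hpos : ∀ x ∈ l, 0 < x) :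
    (InRankSet l ((m : ℤ) - 1) ↔
        ((mAlpha m l).headD 0 : ℤ) ≤ (m : ℤ) + (mDurfee m l : ℤ) - 1) ∧
    (InRankSet l ((m : ℤ) - 1) ↔
        ((l.filter (fun x => mDurfee m l < x)).length : ℤ) ≤
          (m : ℤ) + (mDurfee m l : ℤ) - 1) := by
  have hC := getD_m_add_durfee m l
  have key : InRankSet l ((m : ℤ) - 1) ↔
      l.countP (fun x => decide (mDurfee m l < x)) + 1 ≤ m + mDurfee m l := by
    constructor
    · rintro ⟨t, ht⟩
      have hv : l.getD t 0 + m = t + 1 := by omega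
      by_cases hvj : mDurfee m l + 1 ≤ l.getD t 0
      · exfalso
        have h1 : m + mDurfee m l ≤ t := by omega
        have h2 := getD_anti hsort h1
        omega
      · have h1 : l.countP (fun x => decide (mDurfee m l < x)) ≤ t :=
          countP_le_of_getD_le hsort (by omega)
        omega
    · intro hcm
      refine ⟨m + mDurfee m l - 1, ?_⟩
      have h1 : l.getD (m + mDurfee m l - 1) 0 ≤ mDurfee m l := by
        by_contra hcon
        push_neg at hcon
        have := lt_countP_of_lt_getD hsort hcon
        omega
      have h2 : mDurfee m l ≤ l.getD (m + mDurfee m l - 1) 0 := by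
        rcases Nat.eq_zero_or_pos (mDurfee m l) with h0 | h0
        · omega
        · exact durfee_spec h0
      omega
  have hA := alpha_head m hsort hpos
  have harith : ∀ k : ℕ, ((k : ℤ) ≤ (m : ℤ) + (mDurfee m l : ℤ) - 1) ↔
      (k + 1 ≤ m + mDurfee m l) := fun k => by omega
  constructor
  · rw [hA, harith]
    exact key
  · rw [← List.countP_eq_length_filter, harith]
    exact key


end StrUni
end

section
/- For every integer m ≥ 0 and natural number n, u(m+1,n) equals the number of partitions λ of n whose m-Durfee rectangle symbol (α,β)_{(m+j)×j} satisfies all of: (1) ℓ(α) ≤ ℓ(β) − 2; (2) β_1 = j; (3) each of the integers 1, 2, …, m occurs as a part of α. -/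
open Nat Finset

namespace StrUni

namespace Aux

open StrUni


/-- count of entries > t -/
def cnt (c : List ℕ) (t : ℕ) : ℕ := (c.filter (fun x => t < x)).length

lemma conjugate_eq (l : List ℕ) : conjugate l = (List.range (l.headD 0)).map (cnt l) := rfl

lemma headD_eq_getD (l : List ℕ) : l.headD 0 = l.getD 0 0 := by cases l <;> rfl

lemma getD_map_range (f : ℕ → ℕ) {N i : ℕ} (h : i < N) :
    ((List.range N).map f).getD i 0 = f i := by
  rw [List.getD_eq_getElem _ 0 (by simpa using h)]
  simp

lemma getD_map_range' (f : ℕ → ℕ) {N i : ℕ} (h : N ≤ i) :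
    ((List.range N).map f).getD i 0 = 0 := by
  apply List.getD_eq_default
  simpa using h

lemma getD_drop (l : List ℕ) (t i : ℕ) : (l.drop t).getD i 0 = l.getD (t + i) 0 := by
  rcases lt_or_ge (t + i) l.length with h | h
  · rw [List.getD_eq_getElem _ 0 (by simp; omega), List.getD_eq_getElem _ 0 h]
    simp
  · rw [List.getD_eq_default _ 0 (by simp; omega), List.getD_eq_default _ 0 h]

lemma getD_le_of_forall {c : List ℕ} {x : ℕ} (h : ∀ y ∈ c, y ≤ x) (i : ℕ) :
    c.getD i 0 ≤ x := by
  rcases lt_or_ge i c.length with hi | hi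
  · rw [List.getD_eq_getElem _ 0 hi]; exact h _ (List.getElem_mem hi)
  · rw [List.getD_eq_default _ 0 hi]; exact Nat.zero_le x

lemma sorted_getD_mono {c : List ℕ} (hc : c.Pairwise (· ≥ ·)) {i i' : ℕ} (h : i ≤ i') :
    c.getD i' 0 ≤ c.getD i 0 := by
  rcases lt_or_ge i' c.length with hi' | hi'
  · rw [List.getD_eq_getElem _ 0 hi', List.getD_eq_getElem _ 0 (lt_of_le_of_lt h hi')]
    rcases eq_or_lt_of_le h with rfl | hlt
    · exact le_refl _
    · exact (List.pairwise_iff_getElem.mp hc) i i' _ _ hlt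
  · rw [List.getD_eq_default _ 0 hi']; exact Nat.zero_le _

lemma sorted_of_getD {l : List ℕ} (h : ∀ i, i + 1 < l.length → l.getD (i+1) 0 ≤ l.getD i 0) :
    l.Pairwise (· ≥ ·) := by
  rw [← List.isChain_iff_pairwise, List.isChain_iff_getElem]
  intro i hi
  have := h i (by omega)
  rwa [List.getD_eq_getElem _ 0 (by omega), List.getD_eq_getElem _ 0 (by omega)] at this

lemma cnt_lt_iff {c : List ℕ} (hc : c.Pairwise (· ≥ ·)) (i t : ℕ) :
    i < cnt c t ↔ t < c.getD i 0 := by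
  induction c generalizing i with
  | nil => simp [cnt]
  | cons x cs ih =>
    rw [List.pairwise_cons] at hc
    obtain ⟨hx, hcs⟩ := hc
    by_cases hxt : t < x
    · have hcnt : cnt (x :: cs) t = cnt cs t + 1 := by simp [cnt, List.filter_cons, hxt]
      rw [hcnt]
      cases i with
      | zero => simpa using hxt
      | succ i => simpa using ih hcs i
    · have hcnt : cnt (x :: cs) t = cnt cs t := by simp [cnt, List.filter_cons, hxt]
      rw [hcnt]
      have h0 : cnt cs t = 0 := by
        have hy : ∀ y ∈ cs, ¬ (t < y) := fun y hy => by
          have := hx y hy; omega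
        have : cs.filter (fun x => decide (t < x)) = [] :=
          List.filter_eq_nil_iff.mpr (fun a ha => by simpa using hy a ha)
        simp [cnt, this]
      rw [h0]
      simp only [Nat.not_lt_zero, false_iff, not_lt]
      cases i with
      | zero => simpa using Nat.le_of_not_lt hxt
      | succ i =>
        have : cs.getD i 0 ≤ x := getD_le_of_forall hx i
        simp only [List.getD_cons_succ]
        omega

lemma cnt_le_length (c : List ℕ) (t : ℕ) : cnt c t ≤ c.length :=
  List.length_filter_le _ _

lemma cnt_zero {c : List ℕ} (h : ∀ x ∈ c, 0 < x) : cnt c 0 = c.length := by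
  unfold cnt
  rw [List.filter_eq_self.mpr (by simpa using h)]

lemma cnt_eq_zero {c : List ℕ} (hc : c.Pairwise (· ≥ ·)) {t : ℕ} (h : c.getD 0 0 ≤ t) :
    cnt c t = 0 := by
  have := cnt_lt_iff hc 0 t
  omega

lemma length_conjugate (c : List ℕ) : (conjugate c).length = c.headD 0 := by
  simp [conjugate]

lemma getD_conjugate {c : List ℕ} {i : ℕ} (h : i < c.headD 0) :
    (conjugate c).getD i 0 = cnt c i := by
  rw [conjugate_eq]; exact getD_map_range _ h

lemma getD_conjugate' {c : List ℕ} {i : ℕ} (h : c.headD 0 ≤ i) :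
    (conjugate c).getD i 0 = 0 := by
  rw [conjugate_eq]; exact getD_map_range' _ h

lemma cnt_anti (c : List ℕ) {t t' : ℕ} (h : t ≤ t') : cnt c t' ≤ cnt c t := by
  induction c with
  | nil => simp [cnt]
  | cons x cs ih =>
    by_cases hx : t < x <;> by_cases hx' : t' < x <;>
      simp [cnt, List.filter_cons, hx, hx'] at ih ⊢ <;> omega

lemma conjugate_sorted (c : List ℕ) : (conjugate c).Pairwise (· ≥ ·) := by
  apply sorted_of_getD
  intro i hi
  rw [length_conjugate] at hi
  rw [getD_conjugate (by omega), getD_conjugate (by omega)]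
  exact cnt_anti c (by omega)

lemma conjugate_pos {c : List ℕ} : ∀ x ∈ conjugate c, 0 < x := by
  intro x hx
  rw [conjugate_eq] at hx
  obtain ⟨i, hi, rfl⟩ := List.mem_map.mp hx
  rw [List.mem_range] at hi
  cases c with
  | nil => simp at hi
  | cons y cs =>
    simp only [List.headD_cons] at hi
    have : y ∈ (y :: cs).filter (fun x => decide (i < x)) :=
      List.mem_filter.mpr ⟨List.mem_cons_self, by simpa using hi⟩
    have := List.length_pos_iff.mpr (List.ne_nil_of_mem this)
    simpa [cnt] using this

lemma sum_map_range (f : ℕ → ℕ) (N : ℕ) :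
    ((List.range N).map f).sum = ∑ i ∈ Finset.range N, f i := by
  induction N with
  | zero => simp
  | succ n ih => simp [List.range_succ, Finset.sum_range_succ, ih]

lemma map_range_getD_eq_take {l : List ℕ} {n : ℕ} (h : n ≤ l.length) :
    (List.range n).map (l.getD · 0) = l.take n := by
  apply List.ext_getElem (by simpa using h)
  intro i h1 h2
  simp only [List.getElem_map, List.getElem_range, List.getElem_take]
  simp at h2
  rw [List.getD_eq_getElem _ 0 (by omega)]

lemma sum_getD (l : List ℕ) : l.sum = ∑ i ∈ Finset.range l.length, l.getD i 0 := by
  rw [← sum_map_range, map_range_getD_eq_take (le_refl _), List.take_length]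

lemma length_filter_range_lt {N v : ℕ} (h : v ≤ N) :
    ((List.range N).filter (fun t => decide (t < v))).length = v := by
  have hN : N = v + (N - v) := by omega
  rw [hN, List.range_add, List.filter_append]
  rw [List.filter_eq_self.mpr (by intro a ha; simp at ha ⊢; omega)]
  rw [List.filter_eq_nil_iff.mpr (by intro a ha; simp at ha ⊢; obtain ⟨b, _, rfl⟩ := ha; omega)]
  simp

lemma conjugate_sum {c : List ℕ} (hc : c.Pairwise (· ≥ ·)) : (conjugate c).sum = c.sum := by
  induction c with
  | nil => simp [conjugate]
  | cons x cs ih =>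
    rw [List.pairwise_cons] at hc
    obtain ⟨hx, hcs⟩ := hc
    have hcnt : ∀ i, i < x → cnt (x :: cs) i = cnt cs i + 1 := by
      intro i hi; simp [cnt, List.filter_cons, hi]
    rw [conjugate_eq]
    simp only [List.headD_cons]
    rw [sum_map_range]
    rw [Finset.sum_congr rfl (fun i hi => hcnt i (Finset.mem_range.mp hi))]
    rw [Finset.sum_add_distrib]
    simp only [Finset.sum_const, Finset.card_range, smul_eq_mul, mul_one]
    have hsub : Finset.range (cs.headD 0) ⊆ Finset.range x := by
      apply Finset.range_subset_range.mpr
      cases cs with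
      | nil => simp
      | cons y ys => simpa using hx y (by simp)
    have : ∑ i ∈ Finset.range x, cnt cs i = ∑ i ∈ Finset.range (cs.headD 0), cnt cs i := by
      rw [Finset.sum_subset hsub]
      intro i _ hi
      rw [Finset.mem_range, not_lt] at hi
      exact cnt_eq_zero hcs (by rw [← headD_eq_getD]; omega)
    rw [this, ← sum_map_range, ← conjugate_eq, ih hcs]
    simp [Nat.add_comm]

lemma list_ext_getD {l₁ l₂ : List ℕ} (h : l₁.length = l₂.length)
    (h' : ∀ i, i < l₁.length → l₁.getD i 0 = l₂.getD i 0) : l₁ = l₂ := by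
  apply List.ext_getElem h
  intro i h1 h2
  have := h' i h1
  rwa [List.getD_eq_getElem _ 0 h1, List.getD_eq_getElem _ 0 h2] at this

lemma conjugate_conjugate {c : List ℕ} (hc : c.Pairwise (· ≥ ·)) (hpos : ∀ x ∈ c, 0 < x) :
    conjugate (conjugate c) = c := by
  cases hcnil : c with
  | nil => simp [conjugate]
  | cons y cs =>
    rw [← hcnil]
    have hcne : c ≠ [] := by rw [hcnil]; simp
    have hhead : c.headD 0 > 0 := by
      rw [headD_eq_getD, List.getD_eq_getElem _ 0 (by cases c <;> simp_all)]
      exact hpos _ (List.getElem_mem _)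
    have hlenc : (conjugate c).length = c.headD 0 := length_conjugate c
    have hheadconj : (conjugate c).headD 0 = c.length := by
      rw [headD_eq_getD, getD_conjugate hhead, cnt_zero hpos]
    have hlen : (conjugate (conjugate c)).length = c.length := by
      rw [length_conjugate, hheadconj]
    apply list_ext_getD (by rw [hlen])
    intro i hi
    rw [hlen] at hi
    rw [getD_conjugate (by rw [hheadconj]; exact hi)]
    have hkey : cnt (conjugate c) i = c.getD i 0 := by
      unfold cnt
      rw [conjugate_eq, List.filter_map]
      rw [List.length_map]
      have : ((List.range (c.headD 0)).filter ((fun x => decide (i < x)) ∘ cnt c)) =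
          ((List.range (c.headD 0)).filter (fun t => decide (t < c.getD i 0))) := by
        apply List.filter_congr
        intro t _
        simp only [Function.comp_apply, decide_eq_decide]
        exact cnt_lt_iff hc i t
      rw [this, length_filter_range_lt]
      calc c.getD i 0 ≤ c.getD 0 0 := sorted_getD_mono hc (Nat.zero_le i)
        _ = c.headD 0 := (headD_eq_getD c).symm
    rw [hkey, List.getD_eq_getElem _ 0 hi]

lemma mem_conjugate_iff {c : List ℕ} (hc : c.Pairwise (· ≥ ·)) {i : ℕ} (hi : 1 ≤ i) :
    i ∈ conjugate c ↔ c.getD i 0 < c.getD (i-1) 0 := by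
  rw [conjugate_eq]
  simp only [List.mem_map, List.mem_range]
  constructor
  · rintro ⟨t, ht, hcnt⟩
    have h1 : t < c.getD (i-1) 0 := by
      have := (cnt_lt_iff hc (i-1) t).mp (by omega)
      exact this
    have h2 : c.getD i 0 ≤ t := by
      have := (cnt_lt_iff hc i t).not.mp (by omega)
      omega
    omega
  · intro h
    refine ⟨c.getD (i-1) 0 - 1, ?_, ?_⟩
    · have : c.getD (i-1) 0 ≤ c.getD 0 0 := sorted_getD_mono hc (Nat.zero_le _)
      rw [headD_eq_getD]
      omega
    · have h1 : i - 1 < cnt c (c.getD (i-1) 0 - 1) :=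
        (cnt_lt_iff hc _ _).mpr (by omega)
      have h2 : ¬ (i < cnt c (c.getD (i-1) 0 - 1)) := by
        rw [cnt_lt_iff hc]
        omega
      omega

lemma gauss1 (k m : ℕ) : ∑ i ∈ Finset.range (k+m+1), (i - m) = ∑ i ∈ Finset.range (k+1), (k - i) := by
  induction k with
  | zero =>
    rw [Finset.sum_eq_zero (fun i hi => by rw [Finset.mem_range] at hi; omega)]
    simp
  | succ n ih =>
    have h1 : n+1+m+1 = (n+m+1)+1 := by omega
    rw [h1, Finset.sum_range_succ, ih]
    rw [Finset.sum_range_succ (fun i => n + 1 - i) (n+1)]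
    have : ∑ i ∈ Finset.range (n+1), (n+1-i) = ∑ i ∈ Finset.range (n+1), ((n-i) + 1) := by
      apply Finset.sum_congr rfl
      intro i hi; rw [Finset.mem_range] at hi; omega
    rw [this, Finset.sum_add_distrib]
    simp
    omega

lemma gauss2 (k : ℕ) : ∑ i ∈ Finset.range (k+1), (k - i) = k + ∑ t ∈ Finset.range k, (k - 1 - t) := by
  rw [Finset.sum_range_succ' (fun i => k - i) k]
  simp [Nat.add_comm]
  apply Finset.sum_congr rfl
  intro i hi
  omega



lemma desc_gap {l : List ℕ} {lo len : ℕ}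
    (h : ∀ i, lo ≤ i → i + 1 < len → l.getD (i+1) 0 < l.getD i 0)
    {i i' : ℕ} (hlo : lo ≤ i) (hii : i ≤ i') (hl : i' < len) :
    l.getD i' 0 + (i' - i) ≤ l.getD i 0 := by
  induction i', hii using Nat.le_induction with
  | base => simp
  | succ i' hii ih =>
    have h1 := h i' (by omega) (by omega)
    have h2 := ih (by omega)
    omega

lemma asc_gap {l : List ℕ} {k : ℕ}
    (h : ∀ i, i + 1 ≤ k → l.getD i 0 < l.getD (i+1) 0)
    {i i' : ℕ} (hii : i ≤ i') (hik : i' ≤ k) :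
    l.getD i 0 + (i' - i) ≤ l.getD i' 0 := by
  induction i', hii using Nat.le_induction with
  | base => simp
  | succ i' hii ih =>
    have h1 := h i' (by omega)
    have h2 := ih (by omega)
    omega

/-- the intermediate parametrization: (k, a, L, R) with L strictly descending of
length k, R strictly descending of length k+m+1, entries in [1, a-1]. -/
def TP (m n : ℕ) (q : ℕ × ℕ × List ℕ × List ℕ) : Prop :=
  q.2.2.1.length = q.1 ∧ q.2.2.2.length = q.1 + m + 1 ∧ 0 < q.2.1 ∧
  (∀ t, t + 1 < q.1 → q.2.2.1.getD (t+1) 0 < q.2.2.1.getD t 0) ∧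
  (∀ t, t < q.1 → 0 < q.2.2.1.getD t 0 ∧ q.2.2.1.getD t 0 < q.2.1) ∧
  (∀ i, i + 1 < q.1 + m + 1 → q.2.2.2.getD (i+1) 0 < q.2.2.2.getD i 0) ∧
  (∀ i, i < q.1 + m + 1 → 0 < q.2.2.2.getD i 0 ∧ q.2.2.2.getD i 0 < q.2.1) ∧
  q.2.1 + q.2.2.1.sum + q.2.2.2.sum = n

def UP (m n : ℕ) (l : List ℕ) : Prop :=
  l.sum = n ∧ (∀ x ∈ l, 0 < x) ∧
    ∃ k : ℕ, k < l.length ∧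
      (∀ i : ℕ, i + 1 ≤ k → l.getD i 0 < l.getD (i + 1) 0) ∧
      (∀ i : ℕ, k ≤ i → i + 1 < l.length → l.getD (i + 1) 0 < l.getD i 0) ∧
      (l.length : ℤ) - 2 * ((k : ℤ) + 1) + 1 = (m : ℤ) + 1

def PP (m n : ℕ) (l : List ℕ) : Prop :=
  IsPartition l n ∧
    (mAlpha m l).length + 2 ≤ (mBeta m l).length ∧
    (mBeta m l).headD 0 = mDurfee m l ∧
    (∀ k : ℕ, 1 ≤ k → k ≤ m → k ∈ mAlpha m l)

def toT (m : ℕ) (l : List ℕ) : ℕ × ℕ × List ℕ × List ℕ :=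
  let k := (l.length - (m+2))/2
  (k, l.getD k 0, (List.range k).map (fun t => l.getD (k - 1 - t) 0), l.drop (k+1))

def ofT (q : ℕ × ℕ × List ℕ × List ℕ) : List ℕ :=
  (List.range q.1).map (fun t => q.2.2.1.getD (q.1 - 1 - t) 0) ++ q.2.1 :: q.2.2.2

lemma toT_mem {m n : ℕ} {l : List ℕ} (h : UP m n l) : TP m n (toT m l) := by
  obtain ⟨hsum, hpos, k, hk, hinc, hdec, heq⟩ := h
  have hlen : l.length = 2*k + m + 2 := by omega
  have hkOf : (l.length - (m+2))/2 = k := by omega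
  unfold TP toT
  dsimp only
  simp only [hkOf]
  refine ⟨by simp, by rw [List.length_drop, hlen]; omega, ?_, ?_, ?_, ?_, ?_, ?_⟩
  · rw [List.getD_eq_getElem _ 0 (by omega)]
    exact hpos _ (List.getElem_mem _)
  · intro t ht
    rw [getD_map_range _ (by omega), getD_map_range _ (by omega)]
    have := hinc (k - 1 - (t+1)) (by omega)
    have he : k - 1 - (t+1) + 1 = k - 1 - t := by omega
    rwa [he] at this
  · intro t ht
    rw [getD_map_range _ ht]
    constructor
    · rw [List.getD_eq_getElem _ 0 (by omega)]
      exact hpos _ (List.getElem_mem _)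
    · have := asc_gap hinc (i := k - 1 - t) (i' := k) (by omega) (le_refl k)
      omega
  · intro i hi
    rw [getD_drop, getD_drop]
    have := hdec (k + 1 + i) (by omega) (by omega)
    have he : k + 1 + i + 1 = k + 1 + (i+1) := by omega
    rwa [he] at this
  · intro i hi
    rw [getD_drop]
    constructor
    · rw [List.getD_eq_getElem _ 0 (by omega)]
      exact hpos _ (List.getElem_mem _)
    · have := desc_gap hdec (i := k) (i' := k + 1 + i) (le_refl k) (by omega) (by omega)
      omega
  · -- sum
    have hsplit : l.sum = (l.take k).sum + (l.drop k).sum := (List.sum_take_add_sum_drop l k).symm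
    have hdk : l.drop k = l.getD k 0 :: l.drop (k+1) := by
      rw [List.getD_eq_getElem _ 0 (by omega)]
      exact List.drop_eq_getElem_cons (by omega)
    have hmapsum : ((List.range k).map (fun t => l.getD (k - 1 - t) 0)).sum = (l.take k).sum := by
      rw [sum_map_range]
      rw [Finset.sum_range_reflect (fun t => l.getD t 0) k]
      rw [← sum_map_range, map_range_getD_eq_take (by omega)]
    rw [hmapsum]
    rw [hdk, List.sum_cons] at hsplit
    omega

lemma ofT_toT {m n : ℕ} {l : List ℕ} (h : UP m n l) : ofT (toT m l) = l := by
  obtain ⟨hsum, hpos, k, hk, hinc, hdec, heq⟩ := h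
  have hlen : l.length = 2*k + m + 2 := by omega
  have hkOf : (l.length - (m+2))/2 = k := by omega
  unfold ofT toT
  dsimp only
  simp only [hkOf]
  have hpre : (List.range k).map
      (fun t => ((List.range k).map (fun t => l.getD (k - 1 - t) 0)).getD (k - 1 - t) 0)
      = l.take k := by
    rw [← map_range_getD_eq_take (n := k) (by omega)]
    apply List.ext_getElem (by simp)
    intro i h1 h2
    simp only [List.getElem_map, List.getElem_range]
    simp only [List.length_map, List.length_range] at h1
    rw [getD_map_range _ (by omega)]
    congr 1
    omega
  rw [hpre]
  have hmid : l.getD k 0 :: l.drop (k+1) = l.drop k := by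
    rw [List.getD_eq_getElem _ 0 (by omega)]
    exact (List.drop_eq_getElem_cons (by omega)).symm
  rw [hmid, List.take_append_drop]

lemma ofT_mem {m n : ℕ} {q : ℕ × ℕ × List ℕ × List ℕ} (h : TP m n q) : UP m n (ofT q) := by
  obtain ⟨k, a, L, R⟩ := q
  obtain ⟨hL, hR, ha, hLd, hLb, hRd, hRb, hsum⟩ := h
  simp only at hL hR ha hLd hLb hRd hRb hsum
  unfold ofT
  simp only
  have hlen : ((List.range k).map (fun t => L.getD (k - 1 - t) 0) ++ a :: R).length = 2*k + m + 2 := by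
    simp [hR]; omega
  have hgpre : ∀ i, i < k → ((List.range k).map (fun t => L.getD (k - 1 - t) 0) ++ a :: R).getD i 0
      = L.getD (k - 1 - i) 0 := by
    intro i hi
    rw [List.getD_append _ _ 0 i (by simpa using hi)]
    exact getD_map_range _ hi
  have hga : ((List.range k).map (fun t => L.getD (k - 1 - t) 0) ++ a :: R).getD k 0 = a := by
    rw [List.getD_append_right _ _ 0 k (by simp)]
    simp
  have hgsuf : ∀ i, ((List.range k).map (fun t => L.getD (k - 1 - t) 0) ++ a :: R).getD (k + 1 + i) 0
      = R.getD i 0 := by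
    intro i
    rw [List.getD_append_right _ _ 0 _ (by simp; omega)]
    simp only [List.length_map, List.length_range]
    have he : k + 1 + i - k = i + 1 := by omega
    rw [he]
    simp
  refine ⟨?_, ?_, k, by omega, ?_, ?_, by push_cast [hlen]; ring⟩
  · rw [List.sum_append, List.sum_cons]
    rw [sum_map_range, Finset.sum_range_reflect (fun t => L.getD t 0) k]
    rw [← sum_map_range, map_range_getD_eq_take (le_of_eq hL.symm), ← hL, List.take_length]
    omega
  · intro x hx
    rw [List.mem_append, List.mem_cons] at hx
    rcases hx with hx | hx | hx
    · obtain ⟨t, ht, rfl⟩ := List.mem_map.mp hx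
      rw [List.mem_range] at ht
      exact (hLb _ (by omega)).1
    · omega
    · have : ∃ i, i < R.length ∧ R.getD i 0 = x := by
        obtain ⟨i, hi, hix⟩ := List.mem_iff_getElem.mp hx
        exact ⟨i, hi, by rw [List.getD_eq_getElem _ 0 hi]; exact hix⟩
      obtain ⟨i, hi, rfl⟩ := this
      exact (hRb i (by omega)).1
  · intro i hi
    rcases Nat.lt_or_ge (i+1) k with hik | hik
    · rw [hgpre i (by omega), hgpre (i+1) hik]
      have := hLd (k - 1 - (i+1)) (by omega)
      have he : k - 1 - (i+1) + 1 = k - 1 - i := by omega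
      rw [he] at this
      omega
    · have hik' : i + 1 = k := by omega
      rw [hik', hga, hgpre i (by omega)]
      have he : k - 1 - i = 0 := by omega
      rw [he]
      exact (hLb 0 (by omega)).2
  · intro i hik hi
    rcases Nat.eq_or_lt_of_le hik with rfl | hik'
    · rw [hga]
      have h0 := hgsuf 0
      rw [show k + 1 + 0 = k + 1 by omega] at h0
      rw [h0]
      exact (hRb 0 (by omega)).2
    · have he1 : i = k + 1 + (i - k - 1) := by omega
      have he2 : i + 1 = k + 1 + (i - k) := by omega
      rw [he1, hgsuf]
      rw [show k + 1 + (i - k - 1) + 1 = k + 1 + (i - k) by omega, hgsuf]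
      have hRlen : i + 1 < 2 * k + m + 2 := by omega
      have := hRd (i - k - 1) (by omega)
      rwa [show i - k - 1 + 1 = i - k by omega] at this

lemma toT_ofT {m n : ℕ} {q : ℕ × ℕ × List ℕ × List ℕ} (h : TP m n q) : toT m (ofT q) = q := by
  obtain ⟨k, a, L, R⟩ := q
  obtain ⟨hL, hR, ha, hLd, hLb, hRd, hRb, hsum⟩ := h
  simp only at hL hR ha hLd hLb hRd hRb hsum
  have hlen : (ofT (k, a, L, R)).length = 2*k + m + 2 := by
    unfold ofT; simp [hR]; omega
  have hkOf : ((ofT (k, a, L, R)).length - (m+2))/2 = k := by omega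
  unfold toT
  dsimp only
  simp only [hkOf]
  unfold ofT
  dsimp only
  refine Prod.ext rfl (Prod.ext ?_ (Prod.ext ?_ ?_))
  · simp only
    rw [List.getD_append_right _ _ 0 k (by simp)]
    simp
  · simp only
    apply list_ext_getD (by simp [hL])
    intro i hi
    simp only [List.length_map, List.length_range] at hi
    rw [getD_map_range _ hi]
    rw [List.getD_append _ _ 0 _ (by simp; omega)]
    rw [getD_map_range _ (by omega)]
    congr 1
    omega
  · simp only
    have : (List.range k).map (fun t => L.getD (k - 1 - t) 0) ++ a :: R
        = ((List.range k).map (fun t => L.getD (k - 1 - t) 0) ++ [a]) ++ R := by simp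
    rw [this]
    have hl2 : ((List.range k).map (fun t => L.getD (k - 1 - t) 0) ++ [a]).length = k + 1 := by simp
    rw [← hl2, List.drop_left]

lemma getD_map (f : ℕ → ℕ) {l : List ℕ} {i : ℕ} (h : i < l.length) :
    (l.map f).getD i 0 = f (l.getD i 0) := by
  rw [List.getD_eq_getElem _ 0 (by simpa using h), List.getD_eq_getElem _ 0 h]
  simp

lemma getD_take {l : List ℕ} {t i : ℕ} (h : i < t) :
    (l.take t).getD i 0 = l.getD i 0 := by
  rcases lt_or_ge i l.length with hi | hi
  · rw [List.getD_eq_getElem _ 0 (by simp; omega), List.getD_eq_getElem _ 0 hi]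
    simp
  · rw [List.getD_eq_default _ 0 (by simp; omega), List.getD_eq_default _ 0 hi]

lemma forall_mem_iff_getD {l : List ℕ} {P : ℕ → Prop} :
    (∀ x ∈ l, P x) ↔ (∀ i < l.length, P (l.getD i 0)) := by
  constructor
  · intro h i hi
    rw [List.getD_eq_getElem _ 0 hi]
    exact h _ (List.getElem_mem hi)
  · intro h x hx
    obtain ⟨i, hi, rfl⟩ := List.mem_iff_getElem.mp hx
    rw [← List.getD_eq_getElem _ 0 hi]
    exact h i hi

def toLam (m : ℕ) (q : ℕ × ℕ × List ℕ × List ℕ) : List ℕ :=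
  (List.range (q.1+m+1)).map (fun i => q.2.2.2.getD i 0 + (i - m)) ++
    conjugate ((List.range (q.1+1)).map (fun i => (q.2.1 :: q.2.2.1).getD i 0 - (q.1 - i)))

def ofLam (m : ℕ) (l : List ℕ) : ℕ × ℕ × List ℕ × List ℕ :=
  (mDurfee m l - 1,
   (conjugate (l.drop (m + mDurfee m l))).getD 0 0 + (mDurfee m l - 1),
   (List.range (mDurfee m l - 1)).map
     (fun t => (conjugate (l.drop (m + mDurfee m l))).getD (t+1) 0 + (mDurfee m l - 1 - 1 - t)),
   (List.range ((mDurfee m l - 1)+m+1)).map (fun i => l.getD i 0 - (i - m)))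

lemma toLam_main {m n k a : ℕ} {L R : List ℕ}
    (hL : L.length = k) (hR : R.length = k+m+1) (ha : 0 < a)
    (hLd : ∀ t, t+1 < k → L.getD (t+1) 0 < L.getD t 0)
    (hLb : ∀ t, t < k → 0 < L.getD t 0 ∧ L.getD t 0 < a)
    (hRd : ∀ i, i+1 < k+m+1 → R.getD (i+1) 0 < R.getD i 0)
    (hRb : ∀ i, i < k+m+1 → 0 < R.getD i 0 ∧ R.getD i 0 < a)
    (hsum : a + L.sum + R.sum = n) :
    PP m n (toLam m (k,a,L,R)) ∧ ofLam m (toLam m (k,a,L,R)) = (k,a,L,R) := by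
  -- gap lemmas
  have hLgap : ∀ t t', t ≤ t' → t' < k → L.getD t' 0 + (t' - t) ≤ L.getD t 0 :=
    fun t t' h1 h2 => desc_gap (lo := 0) (fun i _ hi => hLd i hi) (Nat.zero_le _) h1 h2
  have hRgap : ∀ i i', i ≤ i' → i' < k+m+1 → R.getD i' 0 + (i' - i) ≤ R.getD i 0 :=
    fun i i' h1 h2 => desc_gap (lo := 0) (fun t _ ht => hRd t ht) (Nat.zero_le _) h1 h2
  have hka : k < a := by
    rcases Nat.eq_zero_or_pos k with rfl | hk0
    · exact ha
    · have h1 := hLgap 0 (k-1) (by omega) (by omega)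
      have h2 := (hLb (k-1) (by omega)).1
      have h3 := (hLb 0 (by omega)).2
      omega
  have hRlow : ∀ i, i < k+m+1 → 1 + (k + m - i) ≤ R.getD i 0 := by
    intro i hi
    have h1 := hRgap i (k+m) (by omega) (by omega)
    have h2 := (hRb (k+m) (by omega)).1
    omega
  -- the two halves
  obtain ⟨top, htop⟩ : ∃ t, t = (List.range (k+m+1)).map (fun i => R.getD i 0 + (i - m)) :=
    ⟨_, rfl⟩
  obtain ⟨bv, hbv⟩ : ∃ t, t = (List.range (k+1)).map (fun i => (a :: L).getD i 0 - (k - i)) :=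
    ⟨_, rfl⟩
  have hlam : toLam m (k,a,L,R) = top ++ conjugate bv := by
    rw [htop, hbv]; rfl
  -- top facts
  have htoplen : top.length = k+m+1 := by rw [htop]; simp
  have hgtop : ∀ i, i < k+m+1 → top.getD i 0 = R.getD i 0 + (i - m) := by
    intro i hi; rw [htop]; exact getD_map_range _ hi
  -- bv facts
  have hbvlen : bv.length = k+1 := by rw [hbv]; simp
  have hgbv0 : bv.getD 0 0 = a - k := by
    rw [hbv, getD_map_range _ (by omega)]; simp
  have hgbvs : ∀ t, t < k → bv.getD (t+1) 0 = L.getD t 0 - (k-1-t) := by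
    intro t ht
    rw [hbv, getD_map_range _ (by omega)]
    simp only [List.getD_cons_succ]
    congr 1
    omega
  have hbvpos : ∀ i, i < k+1 → 0 < bv.getD i 0 := by
    intro i hi
    cases i with
    | zero => rw [hgbv0]; omega
    | succ t =>
      rw [hgbvs t (by omega)]
      have h1 := hLgap t (k-1) (by omega) (by omega)
      have h2 := (hLb (k-1) (by omega)).1
      omega
  have hbvmono : ∀ i, i + 1 < k+1 → bv.getD (i+1) 0 ≤ bv.getD i 0 := by
    intro i hi
    cases i with
    | zero =>
      rw [hgbv0, hgbvs 0 (by omega)]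
      have h3 := (hLb 0 (by omega)).2
      omega
    | succ t =>
      rw [hgbvs t (by omega), hgbvs (t+1) (by omega)]
      have h1 := hLd t (by omega)
      have h2 := hLgap (t+1) (k-1) (by omega) (by omega)
      have h3 := (hLb (k-1) (by omega)).1
      omega
  have hbvsorted : bv.Pairwise (· ≥ ·) := by
    apply sorted_of_getD
    intro i hi
    rw [hbvlen] at hi
    exact hbvmono i hi
  have hbvmem : ∀ x ∈ bv, 0 < x := by
    rw [forall_mem_iff_getD]
    intro i hi
    rw [hbvlen] at hi
    exact hbvpos i hi
  -- B = conjugate bv facts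
  have hBlen : (conjugate bv).length = a - k := by
    rw [length_conjugate, headD_eq_getD, hgbv0]
  have hbvhead : 0 < bv.headD 0 := by rw [headD_eq_getD, hgbv0]; omega
  have hBhead : (conjugate bv).getD 0 0 = k + 1 := by
    rw [getD_conjugate hbvhead, cnt_zero hbvmem, hbvlen]
  have hBsorted := conjugate_sorted bv
  have hBle : ∀ i, (conjugate bv).getD i 0 ≤ k+1 := by
    intro i
    have := sorted_getD_mono hBsorted (Nat.zero_le i)
    omega
  have hBpos : ∀ i, i < a - k → 0 < (conjugate bv).getD i 0 := by
    have := (forall_mem_iff_getD (l := conjugate bv)).mp (conjugate_pos)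
    rw [hBlen] at this
    exact this
  -- lambda facts
  have hlamlen : (top ++ conjugate bv).length = (k+m+1) + (a-k) := by
    rw [List.length_append, htoplen, hBlen]
  have hgl1 : ∀ i, i < k+m+1 → (top ++ conjugate bv).getD i 0 = R.getD i 0 + (i - m) := by
    intro i hi
    rw [List.getD_append _ _ 0 i (by omega), hgtop i hi]
  have hgl2 : ∀ i, k+m+1 ≤ i → (top ++ conjugate bv).getD i 0 = (conjugate bv).getD (i - (k+m+1)) 0 := by
    intro i hi
    rw [List.getD_append_right _ _ 0 i (by omega), htoplen]
  -- sortedness of lambda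
  have hlsorted : (top ++ conjugate bv).Pairwise (· ≥ ·) := by
    apply sorted_of_getD
    intro i hi
    rw [hlamlen] at hi
    rcases Nat.lt_or_ge (i+1) (k+m+1) with h1 | h1
    · rw [hgl1 i (by omega), hgl1 (i+1) h1]
      have := hRd i h1
      omega
    · rcases Nat.eq_or_lt_of_le h1 with h2 | h2
      · rw [hgl1 i (by omega), hgl2 (i+1) (by omega)]
        rw [show i + 1 - (k+m+1) = 0 by omega, hBhead]
        have h4 := hRlow i (by omega)
        have h5 : i - m = k := by omega
        omega
      · rw [hgl2 i (by omega), hgl2 (i+1) (by omega)]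
        apply sorted_getD_mono hBsorted
        omega
  have hlpos : ∀ x ∈ (top ++ conjugate bv), 0 < x := by
    rw [forall_mem_iff_getD]
    intro i hi
    rw [hlamlen] at hi
    rcases Nat.lt_or_ge i (k+m+1) with h1 | h1
    · rw [hgl1 i h1]
      have := (hRb i h1).1
      omega
    · rw [hgl2 i h1]
      exact hBpos _ (by omega)
  -- sum of lambda
  have hlsum : (top ++ conjugate bv).sum = n := by
    rw [List.sum_append]
    have h1 : top.sum = R.sum + (∑ i ∈ Finset.range (k+m+1), (i - m)) := by
      rw [htop, sum_map_range, Finset.sum_add_distrib]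
      congr 1
      rw [sum_getD R, hR]
    have h2 : (conjugate bv).sum = bv.sum := conjugate_sum hbvsorted
    have h3 : bv.sum = (a - k) + ∑ t ∈ Finset.range k, (L.getD t 0 - (k-1-t)) := by
      rw [hbv, sum_map_range, Finset.sum_range_succ']
      simp only [Nat.sub_zero, List.getD_cons_zero, List.getD_cons_succ]
      rw [Nat.add_comm]
      congr 1
      apply Finset.sum_congr rfl
      intro t ht
      rw [Finset.mem_range] at ht
      congr 1
      omega
    have h4 : ∑ t ∈ Finset.range k, (L.getD t 0 - (k-1-t)) + ∑ t ∈ Finset.range k, (k-1-t)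
        = L.sum := by
      rw [← Finset.sum_add_distrib]
      rw [sum_getD L, hL]
      apply Finset.sum_congr rfl
      intro t ht
      rw [Finset.mem_range] at ht
      have h5 := hLgap t (k-1) (by omega) (by omega)
      have h6 := (hLb (k-1) (by omega)).1
      omega
    have h7 := gauss1 k m
    have h8 := gauss2 k
    omega
  -- Durfee
  have hDur : mDurfee m (top ++ conjugate bv) = k + 1 := by
    unfold mDurfee
    rw [Nat.findGreatest_eq_iff]
    refine ⟨by rw [hlamlen]; omega, ?_, ?_⟩
    · intro _
      rw [show k + 1 + m - 1 = k + m by omega, hgl1 (k+m) (by omega)]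
      have := (hRb (k+m) (by omega)).1
      omega
    · intro t ht htlen
      rw [hgl2 (t+m-1) (by omega)]
      have := hBle (t+m-1-(k+m+1))
      omega
  have hdrop : (top ++ conjugate bv).drop (m + (k+1)) = conjugate bv := by
    rw [show m + (k+1) = top.length by rw [htoplen]; omega, List.drop_left]
  have hmb : mBeta m (top ++ conjugate bv) = conjugate bv := by
    unfold mBeta
    rw [hDur, hdrop]
  have hmtake : (top ++ conjugate bv).take (m + (k+1)) = top := by
    rw [show m + (k+1) = top.length by rw [htoplen]; omega, List.take_left]
  have hma : mAlpha m (top ++ conjugate bv)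
      = conjugate (top.map (fun x => x - (k+1))) := by
    unfold mAlpha
    rw [hDur, hmtake]
  -- c = top.map (· - (k+1)) facts
  have hclen : (top.map (fun x => x - (k+1))).length = k+m+1 := by simp [htoplen]
  have hgc : ∀ i, i < k+m+1 → (top.map (fun x => x - (k+1))).getD i 0
      = (R.getD i 0 + (i - m)) - (k+1) := by
    intro i hi
    rw [getD_map _ (by omega), hgtop i hi]
  have hcsorted : (top.map (fun x => x - (k+1))).Pairwise (· ≥ ·) := by
    apply sorted_of_getD
    intro i hi
    rw [hclen] at hi
    rw [hgc i (by omega), hgc (i+1) hi]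
    have := hRd i hi
    omega
  have hchead : (top.map (fun x => x - (k+1))).headD 0 = R.getD 0 0 - (k+1) := by
    rw [headD_eq_getD, hgc 0 (by omega)]
    omega
  refine ⟨⟨⟨hlam ▸ hlsorted, hlam ▸ hlpos, hlam ▸ hlsum⟩, ?_, ?_, ?_⟩, ?_⟩
  · -- condition 1
    rw [hlam, hma, hmb, length_conjugate, hchead, length_conjugate, headD_eq_getD bv, hgbv0]
    have h1 := (hRb 0 (by omega)).2
    have h2 := hRlow 0 (by omega)
    omega
  · -- condition 2
    rw [hlam, hmb, hDur, headD_eq_getD, hBhead]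
  · -- condition 3
    intro t ht1 htm
    rw [hlam, hma, mem_conjugate_iff hcsorted ht1]
    rw [hgc t (by omega), hgc (t-1) (by omega)]
    have h1 := hRd (t-1) (by omega)
    have h2 := hRlow t (by omega)
    rw [show t - 1 + 1 = t by omega] at h1
    have h3 : t - m = 0 := by omega
    have h4 : t - 1 - m = 0 := by omega
    omega
  · -- round trip
    rw [hlam]
    unfold ofLam
    have hcc : conjugate (conjugate bv) = bv := conjugate_conjugate hbvsorted hbvmem
    have e1 : k + 1 - 1 = k := by omega
    rw [hDur, hdrop, hcc, e1]
    refine Prod.ext rfl (Prod.ext ?_ (Prod.ext ?_ ?_))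
    · simp only [hgbv0]
      omega
    · simp only
      apply list_ext_getD (by simp [hL])
      intro t ht
      simp only [List.length_map, List.length_range] at ht
      rw [getD_map_range _ ht, hgbvs t ht]
      have h1 := hLgap t (k-1) (by omega) (by omega)
      have h2 := (hLb (k-1) (by omega)).1
      omega
    · simp only
      apply list_ext_getD (by simp [hR])
      intro i hi
      simp only [List.length_map, List.length_range] at hi
      rw [getD_map_range _ (by omega), hgl1 i (by omega)]
      omega

lemma ofLam_main {m n : ℕ} {l : List ℕ} (h : PP m n l) :
    TP m n (ofLam m l) ∧ toLam m (ofLam m l) = l := by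
  obtain ⟨⟨hsorted, hpos, hsum⟩, hc1, hc2, hc3⟩ := h
  obtain ⟨j, hj⟩ : ∃ j, j = mDurfee m l := ⟨_, rfl⟩
  have hmb : mBeta m l = l.drop (m + j) := by unfold mBeta; rw [← hj]
  have hma : mAlpha m l = conjugate ((l.take (m + j)).map (fun x => x - j)) := by
    unfold mAlpha; rw [← hj]
  rw [hmb, hma] at hc1
  rw [hmb, ← hj] at hc2
  -- basic bounds
  have hgj : l.getD (m + j) 0 = j := by
    have h2 := hc2
    rw [headD_eq_getD, getD_drop] at h2
    simpa using h2
  have hlen2 : m + j + 2 ≤ l.length := by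
    have h2 : 2 ≤ (l.drop (m+j)).length := by omega
    rw [List.length_drop] at h2
    omega
  have hj0 : j ≠ 0 := by
    intro h0
    have hmem : m + j < l.length := by omega
    have h2 : 0 < l.getD (m+j) 0 := by
      rw [List.getD_eq_getElem _ 0 hmem]
      exact hpos _ (List.getElem_mem hmem)
    omega
  obtain ⟨k, rfl⟩ : ∃ k, j = k + 1 := ⟨j - 1, by omega⟩
  -- findGreatest facts
  have hfg : Nat.findGreatest (fun k => k ≤ l.getD (k + m - 1) 0) l.length = mDurfee m l := rfl
  rw [← hj, Nat.findGreatest_eq_iff] at hfg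
  obtain ⟨hjle, hjP, hjmax⟩ := hfg
  have hrect_base : k + 1 ≤ l.getD (k + m) 0 := by
    have h2 := hjP (by omega)
    rwa [show k + 1 + m - 1 = k + m by omega] at h2
  have hrect : ∀ i, i < k + m + 1 → k + 1 ≤ l.getD i 0 := by
    intro i hi
    exact le_trans hrect_base (sorted_getD_mono hsorted (by omega))
  -- strictness in first m rows
  obtain ⟨c, hcdef⟩ : ∃ c, c = (l.take (m + (k+1))).map (fun x => x - (k+1)) := ⟨_, rfl⟩
  have hclen : c.length = m + k + 1 := by
    rw [hcdef]
    simp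
    omega
  have hgc : ∀ i, i < m + k + 1 → c.getD i 0 = l.getD i 0 - (k+1) := by
    intro i hi
    rw [hcdef, getD_map _ (by simp; omega), getD_take (by omega)]
  have hcsorted : c.Pairwise (· ≥ ·) := by
    apply sorted_of_getD
    intro i hi
    rw [hclen] at hi
    rw [hgc i (by omega), hgc (i+1) (by omega)]
    have := sorted_getD_mono hsorted (show i ≤ i + 1 by omega)
    omega
  have hstrictm : ∀ t, 1 ≤ t → t ≤ m → l.getD t 0 < l.getD (t-1) 0 := by
    intro t ht1 htm
    have h2 := hc3 t ht1 htm
    rw [hma, ← hcdef] at h2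
    rw [mem_conjugate_iff hcsorted ht1] at h2
    rw [hgc t (by omega), hgc (t-1) (by omega)] at h2
    have h3 := hrect t (by omega)
    omega
  -- B and b
  obtain ⟨B, hB⟩ : ∃ B, B = l.drop (m + (k+1)) := ⟨_, rfl⟩
  have hBlen : B.length = l.length - (m + k + 1) := by rw [hB, List.length_drop]; omega
  have hgB : ∀ i, B.getD i 0 = l.getD (m + k + 1 + i) 0 := by
    intro i
    rw [hB, getD_drop]
    congr 1
  have hBsorted : B.Pairwise (· ≥ ·) := by
    apply sorted_of_getD
    intro i hi
    rw [hgB, hgB]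
    exact sorted_getD_mono hsorted (by omega)
  have hBmem : ∀ x ∈ B, 0 < x := by
    rw [forall_mem_iff_getD]
    intro i hi
    rw [hB] at hi ⊢
    rw [getD_drop]
    rw [List.length_drop] at hi
    rw [List.getD_eq_getElem _ 0 (by omega)]
    exact hpos _ (List.getElem_mem _)
  have hBhead : B.getD 0 0 = k + 1 := by rw [hgB]; rw [show m + k + 1 + 0 = m + (k+1) by omega]; exact hgj
  have hBheadD : B.headD 0 = k + 1 := by rw [headD_eq_getD]; exact hBhead
  obtain ⟨b, hb⟩ : ∃ b, b = conjugate B := ⟨_, rfl⟩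
  have hblen : b.length = k + 1 := by rw [hb, length_conjugate, hBheadD]
  have hb0 : b.getD 0 0 = B.length := by
    rw [hb, getD_conjugate (by rw [hBheadD]; omega), cnt_zero hBmem]
  have hbsorted : b.Pairwise (· ≥ ·) := by rw [hb]; exact conjugate_sorted B
  have hbpos : ∀ i, i < k + 1 → 0 < b.getD i 0 := by
    have h2 := (forall_mem_iff_getD (l := b)).mp (by rw [hb]; exact conjugate_pos)
    rw [hblen] at h2
    exact h2
  have hbmono : ∀ i i', i ≤ i' → b.getD i' 0 ≤ b.getD i 0 :=
    fun i i' hii => sorted_getD_mono hbsorted hii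
  -- length of alpha
  have hlalpha : (conjugate ((l.take (m + (k+1))).map (fun x => x - (k+1)))).length
      = l.getD 0 0 - (k+1) := by
    rw [length_conjugate, ← hcdef, headD_eq_getD, hgc 0 (by omega)]
  have hc1' : l.getD 0 0 - (k+1) + 2 ≤ b.getD 0 0 := by
    rw [hlalpha] at hc1
    rw [hb0, hB]
    omega
  have hl0 : k + 1 ≤ l.getD 0 0 := hrect 0 (by omega)
  -- the tuple
  have hofLam : ofLam m l = (k, b.getD 0 0 + k,
      (List.range k).map (fun t => b.getD (t+1) 0 + (k - 1 - t)),
      (List.range (k+m+1)).map (fun i => l.getD i 0 - (i - m))) := by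
    unfold ofLam
    rw [← hj, ← hB, ← hb]
    simp only [Nat.add_sub_cancel]
  constructor
  · rw [hofLam]
    refine ⟨by simp, by simp, by show 0 < b.getD 0 0 + k; omega, ?_, ?_, ?_, ?_, ?_⟩
    · intro t ht
      simp only
      rw [getD_map_range _ (by omega), getD_map_range _ (by omega)]
      have h2 := hbmono (t+1) (t+1+1) (by omega)
      have h3 := hbpos (t+1+1) (by omega)
      omega
    · intro t ht
      simp only
      rw [getD_map_range _ ht]
      have h2 := hbpos (t+1) (by omega)
      have h3 := hbmono 0 (t+1) (by omega)
      omega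
    · intro i hi
      simp only
      rw [getD_map_range _ (by omega), getD_map_range _ (by omega)]
      rcases Nat.lt_or_ge (i+1) (m+1) with hcase | hcase
      · have h2 := hstrictm (i+1) (by omega) (by omega)
        rw [show i + 1 - 1 = i by omega] at h2
        have h3 : i - m = 0 := by omega
        have h4 : i + 1 - m = 0 := by omega
        omega
      · have h2 := hrect (i+1) (by omega)
        have h3 := sorted_getD_mono hsorted (show i ≤ i+1 by omega)
        omega
    · intro i hi
      simp only
      rw [getD_map_range _ hi]
      have h2 := hrect i hi
      have h3 := sorted_getD_mono hsorted (Nat.zero_le i)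
      constructor
      · omega
      · omega
    · -- sum
      simp only
      have hsplit : (l.take (m + (k+1))).sum + B.sum = l.sum := by
        rw [hB]; exact List.sum_take_add_sum_drop l _
      have htakesum : (l.take (m + (k+1))).sum = ∑ i ∈ Finset.range (k+m+1), l.getD i 0 := by
        rw [show (k+m+1) = m + (k+1) by omega, ← map_range_getD_eq_take (by omega), sum_map_range]
      have hRsum : ((List.range (k+m+1)).map (fun i => l.getD i 0 - (i - m))).sum
          + ∑ i ∈ Finset.range (k+m+1), (i - m) = ∑ i ∈ Finset.range (k+m+1), l.getD i 0 := by
        rw [sum_map_range, ← Finset.sum_add_distrib]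
        apply Finset.sum_congr rfl
        intro i hi
        rw [Finset.mem_range] at hi
        have h2 := hrect i hi
        omega
      have hLsum : ((List.range k).map (fun t => b.getD (t+1) 0 + (k - 1 - t))).sum
          = (∑ t ∈ Finset.range k, b.getD (t+1) 0) + ∑ t ∈ Finset.range k, (k - 1 - t) := by
        rw [sum_map_range, Finset.sum_add_distrib]
      have hbsum : b.getD 0 0 + ∑ t ∈ Finset.range k, b.getD (t+1) 0 = B.sum := by
        have h2 : b.sum = ∑ i ∈ Finset.range (k+1), b.getD i 0 := by
          rw [sum_getD b, hblen]
        rw [Finset.sum_range_succ'] at h2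
        have h3 : b.sum = B.sum := by rw [hb]; exact conjugate_sum hBsorted
        omega
      have h7 := gauss1 k m
      have h8 := gauss2 k
      omega
  · -- round trip
    rw [hofLam]
    unfold toLam
    dsimp only
    have hpart1 : (List.range (k+m+1)).map
        (fun i => ((List.range (k+m+1)).map (fun i => l.getD i 0 - (i - m))).getD i 0 + (i - m))
        = l.take (m + (k+1)) := by
      rw [show m + (k+1) = k+m+1 by omega, ← map_range_getD_eq_take (n := k+m+1) (by omega)]
      apply list_ext_getD (by simp)
      intro i hi
      simp only [List.length_map, List.length_range] at hi
      rw [getD_map_range _ hi, getD_map_range _ hi, getD_map_range _ hi]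
      have h2 := hrect i hi
      omega
    have hpart2 : (List.range (k+1)).map
        (fun i => ((b.getD 0 0 + k) :: (List.range k).map (fun t => b.getD (t+1) 0 + (k - 1 - t))).getD i 0 - (k - i))
        = b := by
      apply list_ext_getD (by simp [hblen])
      intro i hi
      simp only [List.length_map, List.length_range] at hi
      rw [getD_map_range _ hi]
      cases i with
      | zero => simp
      | succ t =>
        simp only [List.getD_cons_succ]
        rw [getD_map_range _ (by omega)]
        omega
    rw [hpart1, hpart2, hb, conjugate_conjugate hBsorted hBmem, hB]
    exact List.take_append_drop _ l

lemma toLam_mem {m n : ℕ} {q : ℕ × ℕ × List ℕ × List ℕ} (h : TP m n q) : PP m n (toLam m q) := by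
  obtain ⟨k, a, L, R⟩ := q
  obtain ⟨hL, hR, ha, hLd, hLb, hRd, hRb, hsum⟩ := h
  simp only at hL hR ha hLd hLb hRd hRb hsum
  exact (toLam_main hL hR ha hLd hLb hRd hRb hsum).1

lemma ofLam_toLam {m n : ℕ} {q : ℕ × ℕ × List ℕ × List ℕ} (h : TP m n q) :
    ofLam m (toLam m q) = q := by
  obtain ⟨k, a, L, R⟩ := q
  obtain ⟨hL, hR, ha, hLd, hLb, hRd, hRb, hsum⟩ := h
  simp only at hL hR ha hLd hLb hRd hRb hsum
  exact (toLam_main hL hR ha hLd hLb hRd hRb hsum).2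

lemma ofLam_mem {m n : ℕ} {l : List ℕ} (h : PP m n l) : TP m n (ofLam m l) :=
  (ofLam_main h).1

lemma toLam_ofLam {m n : ℕ} {l : List ℕ} (h : PP m n l) : toLam m (ofLam m l) = l :=
  (ofLam_main h).2

end Aux


theorem stmt16 (m n : ℕ) :
    u ((m : ℤ) + 1) n =
      Nat.card {l : List ℕ // IsPartition l n ∧
        (mAlpha m l).length + 2 ≤ (mBeta m l).length ∧
        (mBeta m l).headD 0 = mDurfee m l ∧
        (∀ k : ℕ, 1 ≤ k → k ≤ m → k ∈ mAlpha m l)} := by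
  have e1 : {l : List ℕ // Aux.UP m n l} ≃ {q : ℕ × ℕ × List ℕ × List ℕ // Aux.TP m n q} :=
    { toFun := fun x => ⟨Aux.toT m x.1, Aux.toT_mem x.2⟩
      invFun := fun x => ⟨Aux.ofT x.1, Aux.ofT_mem x.2⟩
      left_inv := fun x => Subtype.ext (Aux.ofT_toT x.2)
      right_inv := fun x => Subtype.ext (Aux.toT_ofT x.2) }
  have e2 : {q : ℕ × ℕ × List ℕ × List ℕ // Aux.TP m n q} ≃ {l : List ℕ // Aux.PP m n l} :=
    { toFun := fun x => ⟨Aux.toLam m x.1, Aux.toLam_mem x.2⟩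
      invFun := fun x => ⟨Aux.ofLam m x.1, Aux.ofLam_mem x.2⟩
      left_inv := fun x => Subtype.ext (Aux.ofLam_toLam x.2)
      right_inv := fun x => Subtype.ext (Aux.toLam_ofLam x.2) }
  show Nat.card {l : List ℕ // Aux.UP m n l} = Nat.card {l : List ℕ // Aux.PP m n l}
  exact Nat.card_congr (e1.trans e2)

end StrUni
end
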